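/- arXiv:2409.06376 — 8 statements merged into one kernel-verified Lean document; each statement's English description precedes it below -/
import Mathlib

section
/- Let C ⊆ ℕ^p be an integer cone, let ⪯ be an admissible total order on ℕ^p, let f ∈ C \ {0}, and let g be a positive integer. Then there exists a C-semigroup S with Fb(S) = f and g(S) = g if and only if ⌈#B(f)/2⌉ ≤ g ≤ N(f). -/
open Set BigOperators

/-- `C` is an integer cone: the intersection with `ℕ^p` of the set of nonnegative
real linear combinations of a finite set `A ⊆ ℕ^p`. -/
def IsIntegerCone (p : ℕ) (C : Set (Fin p → ℕ)) : Prop :=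
  ∃ A : Finset (Fin p → ℕ),
    C = {x : Fin p → ℕ | ∃ l : (Fin p → ℕ) → ℝ,
      (∀ a, 0 ≤ l a) ∧ ∀ i, (x i : ℝ) = ∑ a ∈ A, l a * (a i : ℝ)}

/-- An admissible total order on `ℕ^p`: total, compatible with addition,
with `0` minimum, and with finite down-sets. -/
structure AdmissibleOrder (p : ℕ) where
  le : (Fin p → ℕ) → (Fin p → ℕ) → Prop
  le_refl : ∀ x, le x x
  le_antisymm : ∀ x y, le x y → le y x → x = y
  le_trans : ∀ x y z, le x y → le y z → le x z
  le_total : ∀ x y, le x y ∨ le y x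
  add_right : ∀ x y z, le x y → le (x + z) (y + z)
  zero_le : ∀ x, le 0 x
  finite_le : ∀ f, {x : Fin p → ℕ | le x f}.Finite

/-- Strict version of an admissible order. -/
def AdmissibleOrder.lt {p : ℕ} (O : AdmissibleOrder p) (x y : Fin p → ℕ) : Prop :=
  O.le x y ∧ x ≠ y

/-- `S` is a `C`-semigroup: a submonoid of `ℕ^p` contained in `C` with finite complement in `C`. -/
def IsCSemigroup {p : ℕ} (C S : Set (Fin p → ℕ)) : Prop :=
  S ⊆ C ∧ 0 ∈ S ∧ (∀ x ∈ S, ∀ y ∈ S, x + y ∈ S) ∧ (C \ S).Finite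

/-- `f` is the Frobenius element of `S`: the `⪯`-maximum of `C \ S`. -/
def IsFrob {p : ℕ} (O : AdmissibleOrder p) (C S : Set (Fin p → ℕ)) (f : Fin p → ℕ) : Prop :=
  f ∈ C \ S ∧ ∀ x ∈ C \ S, O.le x f

/-- `B(f) = {x ∈ C : f - x ∈ C}`. -/
def BSet {p : ℕ} (C : Set (Fin p → ℕ)) (f : Fin p → ℕ) : Set (Fin p → ℕ) :=
  {x | x ∈ C ∧ ∃ y ∈ C, x + y = f}

/-- `N(f) = #{x ∈ C \ {0} : x ⪯ f}`. -/
noncomputable def NNum {p : ℕ} (O : AdmissibleOrder p) (C : Set (Fin p → ℕ)) (f : Fin p → ℕ) : ℕ :=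
  {x | x ∈ C ∧ x ≠ 0 ∧ O.le x f}.ncard

/-- The genus of `S`: the number of gaps `#(C \ S)`. -/
noncomputable def genusOf {p : ℕ} (C S : Set (Fin p → ℕ)) : ℕ := (C \ S).ncard

/-- The number of small elements `n(S) = #{s ∈ S : s ≺ Fb(S)}`; an element is smaller than
the Frobenius element iff it is strictly smaller than some gap. -/
noncomputable def smallCount {p : ℕ} (O : AdmissibleOrder p) (C S : Set (Fin p → ℕ)) : ℕ :=
  {s | s ∈ S ∧ ∃ h ∈ C \ S, O.lt s h}.ncard

/-- The minimal generating set of `S`. -/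
def msg {p : ℕ} (S : Set (Fin p → ℕ)) : Set (Fin p → ℕ) :=
  (S \ {0}) \ {x | ∃ a ∈ S \ {0}, ∃ b ∈ S \ {0}, a + b = x}

/-- `S` is a `B`-semigroup with respect to `f`. -/
def IsBSemigroup {p : ℕ} (O : AdmissibleOrder p) (C S : Set (Fin p → ℕ)) (f : Fin p → ℕ) : Prop :=
  IsCSemigroup C S ∧ IsFrob O C S f ∧ C \ BSet C f ⊆ S

/-- `a = α(S)`, the `⪯`-minimum of `(S \ {0}) ∩ B(f)`, with the convention `α(S) = f`
when `S ∩ B(f) = {0}`. -/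
def IsAlpha {p : ℕ} (O : AdmissibleOrder p) (C S : Set (Fin p → ℕ)) (f a : Fin p → ℕ) : Prop :=
  (a ∈ S ∧ a ≠ 0 ∧ a ∈ BSet C f ∧ ∀ x ∈ S, x ≠ 0 → x ∈ BSet C f → O.le a x)
  ∨ ((∀ x ∈ S ∩ BSet C f, x = 0) ∧ a = f)

/-- `x` is a special gap of `T`. -/
def SpecialGap {p : ℕ} (C T : Set (Fin p → ℕ)) (x : Fin p → ℕ) : Prop :=
  x ∈ C \ T ∧ x + x ∈ T ∧ ∀ t ∈ T, t ≠ 0 → x + t ∈ T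

/-- `l = λ(S)`, the `⪯`-largest gap of `S` lying outside `B(f)` (no convention case). -/
def IsLambdaGap {p : ℕ} (O : AdmissibleOrder p) (C S : Set (Fin p → ℕ)) (f l : Fin p → ℕ) : Prop :=
  l ∈ C \ S ∧ l ∉ BSet C f ∧ ∀ x ∈ C \ S, x ∉ BSet C f → O.le x l

/-- `l = λ(S)`, with the convention `λ(S) = 0` when `S` has no gap outside `B(f)`. -/
def IsLambda {p : ℕ} (O : AdmissibleOrder p) (C S : Set (Fin p → ℕ)) (f l : Fin p → ℕ) : Prop :=
  IsLambdaGap O C S f l ∨ ((∀ x ∈ C \ S, x ∈ BSet C f) ∧ l = 0)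

/-- `x ≤_C y` iff `y - x ∈ C`. -/
def leC {p : ℕ} (C : Set (Fin p → ℕ)) (x y : Fin p → ℕ) : Prop := ∃ d ∈ C, x + d = y

/-- The ordinary `C`-semigroup `S_c = {0} ∪ {x ∈ C : c ⪯ x}`. -/
def ordinarySemigroup {p : ℕ} (O : AdmissibleOrder p) (C : Set (Fin p → ℕ))
    (c : Fin p → ℕ) : Set (Fin p → ℕ) :=
  insert 0 {x | x ∈ C ∧ O.le c x}

/-- `S` is an arf semigroup in `C`. -/
def ArfSemigroup {p : ℕ} (C S : Set (Fin p → ℕ)) : Prop :=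
  ∀ x ∈ S, ∀ y ∈ S, ∀ z ∈ S, leC C z y → leC C y x →
    ∀ w : Fin p → ℕ, w + z = x + y → w ∈ S

/-- `S` is a saturated semigroup in `C`: whenever `s, s₁, …, s_r ∈ S` with `s_i ≤_C s`,
and `z : Fin r → ℤ` with `z₁s₁ + ⋯ + z_rs_r ∈ C` (as an element `t` of `ℕ^p`),
then `s + z₁s₁ + ⋯ + z_rs_r = s + t ∈ S`. -/
def SaturatedSemigroup {p : ℕ} (C S : Set (Fin p → ℕ)) : Prop :=
  ∀ (r : ℕ) (s : Fin p → ℕ) (si : Fin r → (Fin p → ℕ)) (z : Fin r → ℤ),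
    s ∈ S → (∀ i, si i ∈ S) → (∀ i, leC C (si i) s) →
    ∀ t ∈ C, (∀ j, (t j : ℤ) = ∑ i, z i * (si i j : ℤ)) → s + t ∈ S

section Auxiliary

variable {p : ℕ}

private lemma pi_add_left_cancel {x y z : Fin p → ℕ} (h : x + y = x + z) : y = z := by
  funext i
  have h' := congrFun h i
  simp only [Pi.add_apply] at h'
  omega

private lemma pi_add_right_cancel {x y z : Fin p → ℕ} (h : x + z = y + z) : x = y := by
  funext i
  have h' := congrFun h i
  simp only [Pi.add_apply] at h'
  omega

private lemma ord_le_add (O : AdmissibleOrder p) (x y : Fin p → ℕ) : O.le x (x + y) := by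
  have h := O.add_right 0 y x (O.zero_le y)
  simpa [add_comm] using h

private lemma ord_cancel (O : AdmissibleOrder p) {x y z : Fin p → ℕ}
    (h : O.le (x + z) (y + z)) : O.le x y := by
  rcases O.le_total x y with h' | h'
  · exact h'
  · have h2 := O.add_right y x z h'
    have hxy : x = y := pi_add_right_cancel (O.le_antisymm _ _ h h2)
    exact hxy ▸ O.le_refl x

private lemma cone_zero_mem {C : Set (Fin p → ℕ)} (hC : IsIntegerCone p C) :
    (0 : Fin p → ℕ) ∈ C := by
  obtain ⟨A, rfl⟩ := hC
  exact ⟨fun _ => 0, fun a => le_refl 0, fun i => by simp⟩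

private lemma cone_add_mem {C : Set (Fin p → ℕ)} (hC : IsIntegerCone p C)
    {x y : Fin p → ℕ} (hx : x ∈ C) (hy : y ∈ C) : x + y ∈ C := by
  obtain ⟨A, rfl⟩ := hC
  obtain ⟨l1, hl1, hx1⟩ := hx
  obtain ⟨l2, hl2, hy1⟩ := hy
  refine ⟨fun a => l1 a + l2 a, fun a => add_nonneg (hl1 a) (hl2 a), fun i => ?_⟩
  have hxy : (((x + y) i : ℕ) : ℝ) = (x i : ℝ) + (y i : ℝ) := by
    simp [Pi.add_apply]
  rw [hxy, hx1 i, hy1 i, ← Finset.sum_add_distrib]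
  exact Finset.sum_congr rfl fun a _ => by ring

private lemma bset_le (O : AdmissibleOrder p) {C : Set (Fin p → ℕ)} {f x : Fin p → ℕ}
    (hx : x ∈ BSet C f) : O.le x f := by
  obtain ⟨_, y, hy, hxy⟩ := hx
  exact hxy ▸ ord_le_add O x y

private lemma bset_finite (O : AdmissibleOrder p) (C : Set (Fin p → ℕ)) (f : Fin p → ℕ) :
    (BSet C f).Finite :=
  (O.finite_le f).subset fun x hx => bset_le O hx

private lemma bset_inv {C : Set (Fin p → ℕ)} {f x : Fin p → ℕ}
    (hx : x ∈ BSet C f) : (f - x) ∈ BSet C f ∧ x + (f - x) = f := by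
  obtain ⟨hxC, y, hyC, hxy⟩ := hx
  have hfy : f - x = y := by
    funext j
    have h' := congrFun hxy j
    simp only [Pi.add_apply] at h'
    simp only [Pi.sub_apply]
    omega
  rw [hfy]
  exact ⟨⟨hyC, x, hxC, by rw [add_comm]; exact hxy⟩, hxy⟩

/-- Lower bound: `#B(f) ≤ 2 · genus`. -/
private lemma lower_bound (O : AdmissibleOrder p) {C S : Set (Fin p → ℕ)} {f : Fin p → ℕ}
    (hS : IsCSemigroup C S) (hF : IsFrob O C S f) :
    (BSet C f).ncard ≤ 2 * (C \ S).ncard := by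
  classical
  have hGfin : (C \ S).Finite := hS.2.2.2
  have hBfin := bset_finite O C f
  set i : (Fin p → ℕ) → (Fin p → ℕ) := fun x => f - x with hi
  have key : BSet C f ⊆ (BSet C f ∩ (C \ S)) ∪ i '' (BSet C f ∩ (C \ S)) := by
    intro x hx
    obtain ⟨hxC, y, hyC, hxy⟩ := hx
    by_cases hxG : x ∈ C \ S
    · exact Or.inl ⟨⟨hxC, y, hyC, hxy⟩, hxG⟩
    · have hxS : x ∈ S := by
        by_contra h
        exact hxG ⟨hxC, h⟩
      have hyS : y ∉ S := fun hyS => hF.1.2 (hxy ▸ hS.2.2.1 x hxS y hyS)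
      refine Or.inr ⟨y, ⟨⟨hyC, x, hxC, by rw [add_comm]; exact hxy⟩, hyC, hyS⟩, ?_⟩
      funext j
      have h' := congrFun hxy j
      simp only [Pi.add_apply] at h'
      simp only [hi, Pi.sub_apply]
      omega
  have hIfin : (BSet C f ∩ (C \ S)).Finite := hBfin.inter_of_left _
  calc (BSet C f).ncard
      ≤ ((BSet C f ∩ (C \ S)) ∪ i '' (BSet C f ∩ (C \ S))).ncard :=
        Set.ncard_le_ncard key (hIfin.union (hIfin.image i))
    _ ≤ (BSet C f ∩ (C \ S)).ncard + (i '' (BSet C f ∩ (C \ S))).ncard :=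
        Set.ncard_union_le _ _
    _ ≤ (C \ S).ncard + (C \ S).ncard :=
        add_le_add (Set.ncard_le_ncard Set.inter_subset_right hGfin)
          (le_trans (Set.ncard_image_le hIfin)
            (Set.ncard_le_ncard Set.inter_subset_right hGfin))
    _ = 2 * (C \ S).ncard := by ring

/-- Upper bound: `genus ≤ N(f)`. -/
private lemma upper_bound (O : AdmissibleOrder p) {C S : Set (Fin p → ℕ)} {f : Fin p → ℕ}
    (hS : IsCSemigroup C S) (hF : IsFrob O C S f) :
    (C \ S).ncard ≤ NNum O C f := by
  have hsub : C \ S ⊆ {x | x ∈ C ∧ x ≠ 0 ∧ O.le x f} := by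
    intro x hx
    refine ⟨hx.1, ?_, hF.2 x hx⟩
    rintro rfl
    exact hx.2 hS.2.1
  have hfin : {x | x ∈ C ∧ x ≠ 0 ∧ O.le x f}.Finite :=
    (O.finite_le f).subset fun x hx => hx.2.2
  exact Set.ncard_le_ncard hsub hfin

/-- The set of gaps of the minimal-genus semigroup. -/
private def Gmin (O : AdmissibleOrder p) (C : Set (Fin p → ℕ)) (f : Fin p → ℕ) :
    Set (Fin p → ℕ) :=
  {x | x ∈ BSet C f ∧ x ≠ 0 ∧ (O.le (x + x) f ∨ x = f)}

private lemma gmin_subset_bset (O : AdmissibleOrder p) (C : Set (Fin p → ℕ)) (f : Fin p → ℕ) :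
    Gmin O C f ⊆ BSet C f := fun _ hx => hx.1

private lemma f_mem_gmin (O : AdmissibleOrder p) {C : Set (Fin p → ℕ)} {f : Fin p → ℕ}
    (hC : IsIntegerCone p C) (hfC : f ∈ C) (hf0 : f ≠ 0) : f ∈ Gmin O C f :=
  ⟨⟨hfC, 0, cone_zero_mem hC, by simp⟩, hf0, Or.inr rfl⟩

private lemma gmin_card (O : AdmissibleOrder p) {C : Set (Fin p → ℕ)} {f : Fin p → ℕ}
    (hC : IsIntegerCone p C) (hfC : f ∈ C) (hf0 : f ≠ 0) :
    (Gmin O C f).ncard = ((BSet C f).ncard + 1) / 2 := by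
  classical
  set B := BSet C f with hB
  set G := Gmin O C f with hG
  have hGB : G ⊆ B := gmin_subset_bset O C f
  have hBfin : B.Finite := bset_finite O C f
  have hGfin : G.Finite := hBfin.subset hGB
  set i : (Fin p → ℕ) → (Fin p → ℕ) := fun x => f - x with hi
  set F0 : Set (Fin p → ℕ) := {x | x + x = f} with hF0
  -- the key image identity
  have himage : i '' (B \ G) = G \ F0 := by
    apply Set.Subset.antisymm
    · rintro _ ⟨x, ⟨hxB, hxG⟩, rfl⟩
      show f - x ∈ G \ F0
      obtain ⟨hyB, hxy⟩ := bset_inv hxB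
      set y := f - x with hy
      by_cases hx0 : x = 0
      · subst hx0
        have hyf : y = f := by
          have : (0 : Fin p → ℕ) + y = 0 + f := by rw [hxy, zero_add]
          simpa using pi_add_left_cancel this
        rw [hyf]
        refine ⟨f_mem_gmin O hC hfC hf0, ?_⟩
        intro hff
        have : f = 0 := by
          have : f + f = f + 0 := by rw [add_zero]; exact hff
          exact (pi_add_left_cancel this).symm ▸ rfl
        exact hf0 this
      · have hxne : ¬ (O.le (x + x) f ∨ x = f) := fun hd => hxG ⟨hxB, hx0, hd⟩
        have hxf : x ≠ f := fun h => hxne (Or.inr h)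
        have hxle : O.le f (x + x) :=
          (O.le_total (x + x) f).resolve_left fun h => hxne (Or.inl h)
        have hy0 : y ≠ 0 := by
          intro h
          apply hxf
          rw [← hxy, h, add_zero]
        -- y + y ⪯ f
        have hyx : O.le y x := by
          apply ord_cancel O (z := x)
          have hyx2 : y + x = f := by rw [add_comm]; exact hxy
          rw [hyx2]
          exact hxle
        have hyyf : O.le (y + y) f := by
          have h1 : O.le (y + y) (x + y) := O.add_right y x y hyx
          rw [← hxy]
          exact h1
        refine ⟨⟨hyB, hy0, Or.inl hyyf⟩, ?_⟩
        intro hyy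
        have hxy2 : x = y := by
          have : x + y = y + y := by rw [hxy]; exact hyy.symm
          exact pi_add_right_cancel this
        exact hxne (Or.inl (by rw [hxy2]; exact hyyf))
    · rintro z ⟨hzG, hzF0⟩
      obtain ⟨hzB, hz0, hzor⟩ := hzG
      obtain ⟨hxB, hzx⟩ := bset_inv hzB
      set x := f - z with hx
      have hiz : i x = z := by
        funext j
        have h' := congrFun hzx j
        simp only [Pi.add_apply] at h'
        simp only [hi, Pi.sub_apply, hx]
        omega
      refine ⟨x, ⟨hxB, ?_⟩, hiz⟩
      intro hxG
      obtain ⟨_, hx0, hxor⟩ := hxG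
      rcases hzor with hzle | hzf
      · rcases hxor with hxle | hxf
        · -- both halves small: z = x, contradiction with z ∉ F0
          have hxz : O.le x z := by
            apply ord_cancel O (z := x)
            rw [hzx]
            exact hxle
          have hzx' : O.le z x := by
            apply ord_cancel O (z := z)
            have h'' : x + z = f := by rw [add_comm]; exact hzx
            rw [h'']
            exact hzle
          have : z = x := O.le_antisymm _ _ hzx' hxz
          apply hzF0
          show z + z = f
          rw [← hzx]
          rw [← this]
        · apply hz0
          rw [hxf] at hzx
          have : f + z = f + 0 := by rw [add_zero, add_comm]; exact hzx
          exact pi_add_left_cancel this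
      · -- z = f, so x = 0, contradiction with x ≠ 0
        apply hx0
        rw [hzf] at hzx
        have : f + x = f + 0 := by rw [add_zero]; exact hzx
        exact pi_add_left_cancel this
  -- injectivity of i on B
  have hinj : Set.InjOn i (B \ G) := by
    intro a ha b hb hab
    obtain ⟨haB, haeq⟩ := bset_inv ha.1
    obtain ⟨hbB, hbeq⟩ := bset_inv hb.1
    have : a + i a = b + i a := by
      show a + (f - a) = b + (f - a)
      rw [haeq]
      calc f = b + (f - b) := hbeq.symm
        _ = b + (f - a) := by rw [show f - b = f - a from hab.symm]
    exact pi_add_right_cancel this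
  have hcard1 : (B \ G).ncard = (G \ F0).ncard := by
    rw [← himage, Set.ncard_image_of_injOn hinj]
  have hcard2 : (B \ G).ncard + G.ncard = B.ncard :=
    Set.ncard_diff_add_ncard_of_subset hGB hBfin
  have hcard3 : (G \ F0).ncard + (G ∩ F0).ncard = G.ncard := by
    have h1 : G ∩ F0 ⊆ G := Set.inter_subset_left
    have h2 : G \ F0 = G \ (G ∩ F0) := by
      ext x; simp only [Set.mem_diff, Set.mem_inter_iff]; tauto
    rw [h2]
    exact Set.ncard_diff_add_ncard_of_subset h1 hGfin
  have hF0small : (G ∩ F0).ncard ≤ 1 := by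
    rw [Set.ncard_le_one_iff_eq (hGfin.inter_of_left F0)]
    rcases Set.eq_empty_or_nonempty (G ∩ F0) with h | ⟨a, ha⟩
    · exact Or.inl h
    · right
      refine ⟨a, Set.Subset.antisymm (fun b hb => ?_) (by simpa using ha)⟩
      have h1 : b + b = f := hb.2
      have h2 : a + a = f := ha.2
      have : b + b = a + a := by rw [h1, h2]
      have hba : b = a := by
        funext j
        have h' := congrFun this j
        simp only [Pi.add_apply] at h'
        omega
      simp [hba]
  have hGpos : 1 ≤ G.ncard := by
    rw [Nat.one_le_iff_ne_zero, ← Nat.pos_iff_ne_zero, Set.ncard_pos hGfin]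
    exact ⟨f, f_mem_gmin O hC hfC hf0⟩
  omega

/-- The minimal-genus `C`-semigroup. -/
private lemma smin_spec (O : AdmissibleOrder p) {C : Set (Fin p → ℕ)} {f : Fin p → ℕ}
    (hC : IsIntegerCone p C) (hfC : f ∈ C) (hf0 : f ≠ 0) :
    IsCSemigroup C (C \ Gmin O C f) ∧ IsFrob O C (C \ Gmin O C f) f ∧
      C \ (C \ Gmin O C f) = Gmin O C f := by
  have hGC : Gmin O C f ⊆ C := fun x hx => hx.1.1
  have hdiff : C \ (C \ Gmin O C f) = Gmin O C f := Set.diff_diff_cancel_left hGC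
  have hGfin : (Gmin O C f).Finite := (bset_finite O C f).subset (gmin_subset_bset O C f)
  have hfG : f ∈ Gmin O C f := f_mem_gmin O hC hfC hf0
  have hclosed : ∀ s ∈ C \ Gmin O C f, ∀ t ∈ C \ Gmin O C f, s + t ∈ C \ Gmin O C f := by
    rintro s ⟨hsC, hsG⟩ t ⟨htC, htG⟩
    refine ⟨cone_add_mem hC hsC htC, ?_⟩
    rintro ⟨hstB, hst0, hstor⟩
    obtain ⟨hstC, y, hyC, hsty⟩ := hstB
    have hsB : s ∈ BSet C f :=
      ⟨hsC, t + y, cone_add_mem hC htC hyC, by rw [← add_assoc]; exact hsty⟩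
    have htB : t ∈ BSet C f :=
      ⟨htC, s + y, cone_add_mem hC hsC hyC, by rw [← add_assoc, add_comm t s]; exact hsty⟩
    by_cases hs0 : s = 0
    · subst hs0
      refine htG ?_
      have : (0 : Fin p → ℕ) + t ∈ Gmin O C f :=
        ⟨⟨hstC, y, hyC, hsty⟩, hst0, hstor⟩
      simpa using this
    by_cases ht0 : t = 0
    · subst ht0
      refine hsG ?_
      have : s + (0 : Fin p → ℕ) ∈ Gmin O C f :=
        ⟨⟨hstC, y, hyC, hsty⟩, hst0, hstor⟩
      simpa using this
    have hsnot : ¬ (O.le (s + s) f ∨ s = f) := fun hd => hsG ⟨hsB, hs0, hd⟩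
    have htnot : ¬ (O.le (t + t) f ∨ t = f) := fun hd => htG ⟨htB, ht0, hd⟩
    have hfs : O.le f (s + s) :=
      (O.le_total (s + s) f).resolve_left fun h => hsnot (Or.inl h)
    have hft : O.le f (t + t) :=
      (O.le_total (t + t) f).resolve_left fun h => htnot (Or.inl h)
    rcases hstor with hle | heq
    · -- 2(s+t) ⪯ f, but 2s ⪯ 2(s+t) so 2s ⪯ f, contradiction
      apply hsnot
      left
      have h1 : O.le (s + s) ((s + s) + (t + t)) := ord_le_add O _ _
      have h2 : (s + s) + (t + t) = (s + t) + (s + t) := by abel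
      exact O.le_trans _ _ _ (h2 ▸ h1) hle
    · -- s + t = f : then 2s ⪯ f, contradiction
      apply hsnot
      left
      have h1 : O.le (f + (s + s)) ((t + t) + (s + s)) := O.add_right f (t + t) (s + s) hft
      have h2 : (t + t) + (s + s) = f + f := by rw [← heq]; abel
      rw [h2] at h1
      apply ord_cancel O (z := f)
      have h3 : (s + s) + f = f + (s + s) := by abel
      rw [h3]
      exact h1
  refine ⟨⟨Set.diff_subset, ⟨cone_zero_mem hC, fun h => hf0 ?_⟩, hclosed, ?_⟩, ?_, hdiff⟩
  · -- 0 ∉ Gmin, so we need : 0 ∈ Gmin → f = 0 contradiction; here h : 0 ∈ Gmin O C f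
    exact absurd rfl h.2.1
  · rw [hdiff]; exact hGfin
  · constructor
    · exact ⟨hfC, fun h => h.2 hfG⟩
    · intro x hx
      rw [hdiff] at hx
      exact bset_le O hx.1

private lemma exists_min (O : AdmissibleOrder p) {T : Set (Fin p → ℕ)} (hfin : T.Finite) :
    T.Nonempty → ∃ m ∈ T, ∀ x ∈ T, O.le m x := by
  refine Set.Finite.induction_on (motive := fun T _ => T.Nonempty → ∃ m ∈ T, ∀ x ∈ T, O.le m x)
    T hfin (by rintro ⟨x, hx⟩; exact absurd hx (Set.notMem_empty x)) ?_
  · intro a s ha hs ih _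
    rcases s.eq_empty_or_nonempty with rfl | hne
    · refine ⟨a, Set.mem_insert a _, ?_⟩
      rintro x (rfl | hx)
      · exact O.le_refl x
      · exact absurd hx (Set.notMem_empty x)
    · obtain ⟨m, hm, hmin⟩ := ih hne
      rcases O.le_total a m with h | h
      · refine ⟨a, Set.mem_insert a s, ?_⟩
        rintro x (rfl | hx)
        · exact O.le_refl x
        · exact O.le_trans _ _ _ h (hmin x hx)
      · refine ⟨m, Set.mem_insert_of_mem a hm, ?_⟩
        rintro x (rfl | hx)
        · exact h
        · exact hmin x hx

/-- Step: from a semigroup of genus `g < N(f)` with Frobenius `f`, produce one of genus `g+1`. -/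
private lemma step_lemma (O : AdmissibleOrder p) {C S : Set (Fin p → ℕ)} {f : Fin p → ℕ}
    (hC : IsIntegerCone p C) (hS : IsCSemigroup C S) (hF : IsFrob O C S f)
    (hlt : (C \ S).ncard < NNum O C f) :
    ∃ S', IsCSemigroup C S' ∧ IsFrob O C S' f ∧ (C \ S').ncard = (C \ S).ncard + 1 := by
  classical
  set T : Set (Fin p → ℕ) := S ∩ {x | x ≠ 0 ∧ O.le x f} with hT
  have hNfin : {x | x ∈ C ∧ x ≠ 0 ∧ O.le x f}.Finite :=
    (O.finite_le f).subset fun x hx => hx.2.2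
  have hTfin : T.Finite :=
    hNfin.subset fun x hx => ⟨hS.1 hx.1, hx.2.1, hx.2.2⟩
  have hTne : T.Nonempty := by
    by_contra h
    rw [Set.not_nonempty_iff_eq_empty] at h
    have hsub : {x | x ∈ C ∧ x ≠ 0 ∧ O.le x f} ⊆ C \ S := by
      intro x hx
      refine ⟨hx.1, fun hxS => ?_⟩
      have : x ∈ T := ⟨hxS, hx.2.1, hx.2.2⟩
      rw [h] at this
      exact this
    have := Set.ncard_le_ncard hsub hS.2.2.2
    rw [NNum] at hlt
    omega
  obtain ⟨m, ⟨hmS, hm0, hmf⟩, hmin⟩ := exists_min O hTfin hTne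
  have hmnef : m ≠ f := fun h => hF.1.2 (h ▸ hmS)
  have hmC : m ∈ C := hS.1 hmS
  refine ⟨S \ {m}, ⟨fun x hx => hS.1 hx.1, ⟨hS.2.1, by simpa using hm0.symm⟩, ?_, ?_⟩, ?_, ?_⟩
  · -- closure
    rintro x ⟨hxS, hxm⟩ y ⟨hyS, hym⟩
    refine ⟨hS.2.2.1 x hxS y hyS, ?_⟩
    simp only [Set.mem_singleton_iff] at hxm hym ⊢
    intro hxy
    by_cases hx0 : x = 0
    · subst hx0
      rw [zero_add] at hxy
      exact hym hxy
    by_cases hy0 : y = 0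
    · subst hy0
      rw [add_zero] at hxy
      exact hxm hxy
    have hxT : x ∈ T := by
      refine ⟨hxS, hx0, ?_⟩
      have h1 : O.le x (x + y) := ord_le_add O x y
      exact O.le_trans _ _ _ h1 (hxy ▸ hmf)
    have hxm' : O.le m x := hmin x hxT
    have hxm'' : O.le x m := hxy ▸ ord_le_add O x y
    have : x = m := O.le_antisymm _ _ hxm'' hxm'
    subst this
    apply hy0
    have : x + y = x + 0 := by rw [add_zero]; exact hxy
    exact pi_add_left_cancel this
  · -- finite complement
    have hsub : C \ (S \ {m}) ⊆ insert m (C \ S) := by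
      intro x hx
      by_cases hxm : x = m
      · exact Or.inl hxm
      · right
        refine ⟨hx.1, fun hxS => hx.2 ⟨hxS, by simpa using hxm⟩⟩
    exact Set.Finite.subset (hS.2.2.2.insert m) hsub
  · -- Frobenius
    refine ⟨⟨hF.1.1, fun h => hF.1.2 h.1⟩, ?_⟩
    intro x hx
    by_cases hxm : x = m
    · subst hxm; exact hmf
    · exact hF.2 x ⟨hx.1, fun hxS => hx.2 ⟨hxS, by simpa using hxm⟩⟩
  · -- genus
    have heq : C \ (S \ {m}) = insert m (C \ S) := by
      ext x
      simp only [Set.mem_diff, Set.mem_singleton_iff, Set.mem_insert_iff]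
      constructor
      · rintro ⟨hxC, hx⟩
        by_cases hxm : x = m
        · exact Or.inl hxm
        · exact Or.inr ⟨hxC, fun hxS => hx ⟨hxS, hxm⟩⟩
      · rintro (rfl | ⟨hxC, hxS⟩)
        · exact ⟨hmC, fun h => h.2 rfl⟩
        · exact ⟨hxC, fun h => hxS h.1⟩
    rw [heq, Set.ncard_insert_of_notMem (fun h => h.2 hmS) hS.2.2.2]

end Auxiliary

/-- There exists a C-semigroup with Frobenius element f and genus g iff
⌈#B(f)/2⌉ ≤ g ≤ N(f). -/
theorem statement0 (p : ℕ) (hp : 0 < p) (C : Set (Fin p → ℕ)) (hC : IsIntegerCone p C)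
    (O : AdmissibleOrder p) (f : Fin p → ℕ) (hfC : f ∈ C) (hf0 : f ≠ 0)
    (g : ℕ) (hg : 0 < g) :
    (∃ S : Set (Fin p → ℕ), IsCSemigroup C S ∧ IsFrob O C S f ∧ genusOf C S = g) ↔
      (((BSet C f).ncard + 1) / 2 ≤ g ∧ g ≤ NNum O C f) := by
  constructor
  · rintro ⟨S, hS, hF, hg'⟩
    have h1 := lower_bound O hS hF
    have h2 := upper_bound O hS hF
    rw [genusOf] at hg'
    constructor
    · omega
    · omega
  · rintro ⟨h1, h2⟩
    obtain ⟨hSmin, hFmin, hdiff⟩ := smin_spec O hC hfC hf0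
    have hgenmin : genusOf C (C \ Gmin O C f) = ((BSet C f).ncard + 1) / 2 := by
      rw [genusOf, hdiff, gmin_card O hC hfC hf0]
    have main : ∀ g', ((BSet C f).ncard + 1) / 2 ≤ g' → g' ≤ NNum O C f →
        ∃ S : Set (Fin p → ℕ), IsCSemigroup C S ∧ IsFrob O C S f ∧ genusOf C S = g' := by
      intro g' hg'
      induction g', hg' using Nat.le_induction with
      | base => exact fun _ => ⟨C \ Gmin O C f, hSmin, hFmin, hgenmin⟩
      | succ n hn ih =>
        intro hle
        obtain ⟨S, hS, hF, hgen⟩ := ih (by omega)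
        have hlt : (C \ S).ncard < NNum O C f := by
          rw [genusOf] at hgen
          omega
        obtain ⟨S', hS', hF', hgen'⟩ := step_lemma O hC hS hF hlt
        refine ⟨S', hS', hF', ?_⟩
        rw [genusOf, hgen']
        rw [genusOf] at hgen
        omega
    exact main g h1 h2
end

section
/- Let C ⊆ ℕ^p be an integer cone, ⪯ an admissible total order on ℕ^p, f ∈ C \ {0}, and g a positive integer with ⌈#B(f)/2⌉ ≤ g ≤ N(f). Then a C-semigroup S satisfies Fb(S) = f and g(S) = g if and only if g(S) = g and n(S) = N(f) + 1 − g. -/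
open Set BigOperators

/-- Every finite nonempty set has a maximum w.r.t. an admissible order. -/
lemma exists_admissible_max {p : ℕ} (O : AdmissibleOrder p) (t : Finset (Fin p → ℕ))
    (ht : t.Nonempty) : ∃ m ∈ t, ∀ x ∈ t, O.le x m := by
  classical
  induction t using Finset.induction_on with
  | empty => exact absurd ht (by simp)
  | @insert a s ha ih =>
    rcases s.eq_empty_or_nonempty with rfl | hs
    · exact ⟨a, by simp, by simp [O.le_refl]⟩
    · obtain ⟨m, hm, hmax⟩ := ih hs
      rcases O.le_total a m with h | h
      · exact ⟨m, Finset.mem_insert_of_mem hm, by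
          intro x hx
          rcases Finset.mem_insert.1 hx with rfl | hx
          · exact h
          · exact hmax x hx⟩
      · exact ⟨a, Finset.mem_insert_self a s, by
          intro x hx
          rcases Finset.mem_insert.1 hx with rfl | hx
          · exact O.le_refl x
          · exact O.le_trans x m a (hmax x hx) h⟩

/-- `NNum` is strictly monotone. -/
lemma NNum_lt {p : ℕ} (O : AdmissibleOrder p) (C : Set (Fin p → ℕ))
    (x y : Fin p → ℕ) (hyC : y ∈ C) (hy0 : y ≠ 0) (hlt : O.lt x y) :
    NNum O C x < NNum O C y := by
  apply Set.ncard_lt_ncard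
  · constructor
    · intro z hz
      exact ⟨hz.1, hz.2.1, O.le_trans z x y hz.2.2 hlt.1⟩
    · intro hsub
      have hy : y ∈ {z | z ∈ C ∧ z ≠ 0 ∧ O.le z x} := hsub ⟨hyC, hy0, O.le_refl y⟩
      exact hlt.2 (O.le_antisymm x y hlt.1 hy.2.2)
  · exact ((O.finite_le y).subset (fun z hz => hz.2.2))

/-- Counting formula: if `F` is the Frobenius element of a `C`-semigroup `S`, then
`genus ≤ N(F)` and `n(S) = N(F) + 1 - genus`. -/
lemma frob_count {p : ℕ} (O : AdmissibleOrder p) (C S : Set (Fin p → ℕ))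
    (hS : IsCSemigroup C S) (F : Fin p → ℕ) (hF : IsFrob O C S F) :
    genusOf C S ≤ NNum O C F ∧ smallCount O C S = NNum O C F + 1 - genusOf C S := by
  obtain ⟨hSC, h0S, _, hGfin⟩ := hS
  set G : Set (Fin p → ℕ) := C \ S with hG
  set Nset : Set (Fin p → ℕ) := {x | x ∈ C ∧ x ≠ 0 ∧ O.le x F} with hNset
  have hNfin : Nset.Finite := (O.finite_le F).subset (fun x hx => hx.2.2)
  have hF0 : F ≠ 0 := fun h => hF.1.2 (h ▸ h0S)
  have hGN : G ⊆ Nset := by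
    intro x hx
    exact ⟨hx.1, fun h0 => hx.2 (h0 ▸ h0S), hF.2 x hx⟩
  have hge : G.ncard ≤ Nset.ncard := Set.ncard_le_ncard hGN hNfin
  have hsmall : {s | s ∈ S ∧ ∃ h ∈ C \ S, O.lt s h} = insert 0 (Nset \ G) := by
    ext x
    constructor
    · rintro ⟨hxS, h, hhG, hlt⟩
      have hxF : O.le x F := O.le_trans x h F hlt.1 (hF.2 h hhG)
      by_cases hx0 : x = 0
      · subst hx0; exact Set.mem_insert 0 _
      · exact Set.mem_insert_of_mem _ ⟨⟨hSC hxS, hx0, hxF⟩, fun hxG => hxG.2 hxS⟩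
    · rintro (rfl | hx)
      · exact ⟨h0S, F, hF.1, O.zero_le F, fun h => hF0 h.symm⟩
      · have hxS : x ∈ S := by
          by_contra hxS
          exact hx.2 ⟨hx.1.1, hxS⟩
        refine ⟨hxS, F, hF.1, hx.1.2.2, fun h => hF.1.2 (h ▸ hxS)⟩
  have h0not : (0 : Fin p → ℕ) ∉ Nset \ G := fun h => h.1.2.1 rfl
  have hcount : smallCount O C S = (Nset \ G).ncard + 1 := by
    rw [smallCount, hsmall, Set.ncard_insert_of_notMem h0not (hNfin.diff (t := G))]
  have hdiff : (Nset \ G).ncard = Nset.ncard - G.ncard := Set.ncard_diff hGN (hGfin.subset (fun x hx => hx))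
  have hNN : NNum O C F = Nset.ncard := rfl
  have hgen : genusOf C S = G.ncard := rfl
  rw [hcount, hdiff, hNN, hgen]
  omega

/-- For ⌈#B(f)/2⌉ ≤ g ≤ N(f), a C-semigroup S satisfies Fb(S) = f and g(S) = g iff
g(S) = g and n(S) = N(f) + 1 - g. -/
theorem statement2 (p : ℕ) (hp : 0 < p) (C : Set (Fin p → ℕ)) (hC : IsIntegerCone p C)
    (O : AdmissibleOrder p) (f : Fin p → ℕ) (hfC : f ∈ C) (hf0 : f ≠ 0)
    (g : ℕ) (hg : 0 < g)
    (hg1 : ((BSet C f).ncard + 1) / 2 ≤ g) (hg2 : g ≤ NNum O C f)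
    (S : Set (Fin p → ℕ)) (hS : IsCSemigroup C S) :
    (IsFrob O C S f ∧ genusOf C S = g) ↔
      (genusOf C S = g ∧ smallCount O C S = NNum O C f + 1 - g) := by
  constructor
  · rintro ⟨hFrob, hgen⟩
    obtain ⟨_, hcount⟩ := frob_count O C S hS f hFrob
    exact ⟨hgen, by rw [hcount, hgen]⟩
  · rintro ⟨hgen, hsmall⟩
    refine ⟨?_, hgen⟩
    -- C \ S is finite and nonempty, so it has a maximum m
    have hGfin : (C \ S).Finite := hS.2.2.2
    have hGne : (C \ S).Nonempty := by
      rw [Set.nonempty_iff_ne_empty]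
      intro h
      have : genusOf C S = 0 := by rw [genusOf, h, Set.ncard_empty]
      omega
    have htne : hGfin.toFinset.Nonempty := by
      rwa [Set.Finite.toFinset_nonempty]
    obtain ⟨m, hm, hmax⟩ := exists_admissible_max O hGfin.toFinset htne
    rw [Set.Finite.mem_toFinset] at hm
    have hFrobm : IsFrob O C S m := by
      refine ⟨hm, fun x hx => hmax x (hGfin.mem_toFinset.2 hx)⟩
    obtain ⟨hle, hcount⟩ := frob_count O C S hS m hFrobm
    rw [hgen] at hle hcount
    rw [hcount] at hsmall
    have hNm : NNum O C m = NNum O C f := by omega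
    have hm0 : m ≠ 0 := fun h => hm.2 (h ▸ hS.2.1)
    have hmf : m = f := by
      rcases O.le_total m f with h | h
      · by_contra hne
        have := NNum_lt O C m f hfC hf0 ⟨h, hne⟩
        omega
      · by_contra hne
        have := NNum_lt O C f m hm.1 hm0 ⟨h, fun hh => hne hh.symm⟩
        omega
    exact hmf ▸ hFrobm
end

section
/- Let C ⊆ ℕ^p be an integer cone, ⪯ an admissible total order on ℕ^p, let g and n be positive integers, and suppose f ∈ C \ {0} satisfies N(f) = g + n − 1. Then a C-semigroup S satisfies g(S) = g and n(S) = n if and only if Fb(S) = f and g(S) = g. -/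
open Set BigOperators

/-!
Whenever `F` is the Frobenius element of `S`, the elements of `C` that are `⪯ F` are exactly
the gaps together with the small elements, so `g(S) + n(S) = N(F) + 1` (the `+ 1` is `0`, a small
element not counted by `N`). Since `N` is strictly monotone on `C \ {0}`, the pair `(g(S), n(S))`
therefore determines `Fb(S)`, and conversely.
-/

namespace AdmissibleOrder

variable {p : ℕ} (O : AdmissibleOrder p)

lemma ncard_inter_le_lt_of_lt {A : Set (Fin p → ℕ)} {a b : Fin p → ℕ} (hb : b ∈ A)
    (hab : O.lt a b) : (A ∩ {x | O.le x a}).ncard < (A ∩ {x | O.le x b}).ncard := by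
  refine Set.ncard_lt_ncard ⟨fun x hx => ⟨hx.1, O.le_trans _ _ _ hx.2 hab.1⟩, fun hsub => ?_⟩
    ((O.finite_le b).subset inter_subset_right)
  exact hab.2 (O.le_antisymm _ _ hab.1 (hsub ⟨hb, O.le_refl b⟩).2)

lemma exists_max_of_finite {T : Set (Fin p → ℕ)} (hT : T.Finite) (hne : T.Nonempty) :
    ∃ m ∈ T, ∀ x ∈ T, O.le x m := by
  obtain ⟨m, hm, hmax⟩ :=
    Set.exists_max_image T (fun x => (univ ∩ {y | O.le y x}).ncard) hT hne
  refine ⟨m, hm, fun x hx => by_contra fun hxm => ?_⟩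
  have hmx : O.lt m x := ⟨(O.le_total x m).resolve_left hxm, fun h => hxm (h ▸ O.le_refl m)⟩
  exact (hmax x hx).not_gt (O.ncard_inter_le_lt_of_lt (mem_univ x) hmx)

end AdmissibleOrder

section

variable {p : ℕ} (O : AdmissibleOrder p)

lemma NNum_eq_ncard_inter (C : Set (Fin p → ℕ)) (f : Fin p → ℕ) :
    NNum O C f = ((C \ {0}) ∩ {x | O.le x f}).ncard := by
  simp only [NNum, sdiff_eq, inter_assoc]
  rfl

lemma NNum_injOn (C : Set (Fin p → ℕ)) : InjOn (NNum O C) (C \ {0}) := by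
  intro a ha b hb hN
  by_contra hne
  simp only [NNum_eq_ncard_inter] at hN
  rcases O.le_total a b with hab | hba
  · exact hN.not_lt (O.ncard_inter_le_lt_of_lt hb ⟨hab, hne⟩)
  · exact hN.not_gt (O.ncard_inter_le_lt_of_lt ha ⟨hba, Ne.symm hne⟩)

variable {C S : Set (Fin p → ℕ)}

lemma exists_isFrob (hS : IsCSemigroup C S) (hg : genusOf C S ≠ 0) : ∃ F, IsFrob O C S F :=
  O.exists_max_of_finite hS.2.2.2 (nonempty_of_ncard_ne_zero hg)

lemma IsFrob.ne_zero (hS : IsCSemigroup C S) {F : Fin p → ℕ} (hF : IsFrob O C S F) : F ≠ 0 := by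
  rintro rfl
  exact hF.1.2 hS.2.1

variable {O}

lemma smallCount_eq_of_isFrob {F : Fin p → ℕ} (hF : IsFrob O C S F) :
    smallCount O C S = {s | s ∈ S ∧ O.lt s F}.ncard := by
  unfold smallCount
  congr 1
  ext s
  refine ⟨fun ⟨hs, h, hh, hsh⟩ => ⟨hs, O.le_trans _ _ _ hsh.1 (hF.2 h hh), ?_⟩,
    fun ⟨hs, hsF⟩ => ⟨hs, F, hF.1, hsF⟩⟩
  rintro rfl
  exact hF.1.2 hs

lemma NNum_add_one (h0 : (0 : Fin p → ℕ) ∈ C) (f : Fin p → ℕ) :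
    NNum O C f + 1 = {x | x ∈ C ∧ O.le x f}.ncard := by
  have hdown : {x | x ∈ C ∧ O.le x f} = insert 0 {x | x ∈ C ∧ x ≠ 0 ∧ O.le x f} := by
    ext x
    by_cases hx : x = 0
    · subst hx
      simp [h0, O.zero_le f]
    · simp [hx]
  rw [hdown, ncard_insert_of_notMem (fun h => h.2.1 rfl)
    ((O.finite_le f).subset fun x hx => hx.2.2), NNum]

lemma ncard_le_eq_genusOf_add_of_isFrob (hS : IsCSemigroup C S) {F : Fin p → ℕ}
    (hF : IsFrob O C S F) :
    {x | x ∈ C ∧ O.le x F}.ncard = genusOf C S + {s | s ∈ S ∧ O.lt s F}.ncard := by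
  have hsplit : {x | x ∈ C ∧ O.le x F} = (C \ S) ∪ {s | s ∈ S ∧ O.lt s F} := by
    ext x
    by_cases hxS : x ∈ S
    · have hxF : x ≠ F := fun h => hF.1.2 (h ▸ hxS)
      simp [hxS, hS.1 hxS, AdmissibleOrder.lt, hxF]
    · simp only [mem_ofPred_eq, mem_union, mem_sdiff, hxS, not_false_eq_true, and_true,
        false_and, or_false]
      exact ⟨fun h => h.1, fun hxC => ⟨hxC, hF.2 x ⟨hxC, hxS⟩⟩⟩
  rw [hsplit, ncard_union_eq (disjoint_left.2 fun x hx hx' => hx.2 hx'.1) hS.2.2.2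
    ((O.finite_le F).subset fun x hx => hx.2.1), genusOf]

theorem genusOf_add_smallCount (hS : IsCSemigroup C S) {F : Fin p → ℕ} (hF : IsFrob O C S F) :
    genusOf C S + smallCount O C S = NNum O C F + 1 := by
  rw [smallCount_eq_of_isFrob hF, NNum_add_one (hS.1 hS.2.1),
    ncard_le_eq_genusOf_add_of_isFrob hS hF]

end

theorem statement3_general (p : ℕ) (C : Set (Fin p → ℕ))
    (O : AdmissibleOrder p) (g n : ℕ) (hg : 0 < g)
    (f : Fin p → ℕ) (hfC : f ∈ C) (hf0 : f ≠ 0)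
    (hNf : NNum O C f = g + n - 1)
    (S : Set (Fin p → ℕ)) (hS : IsCSemigroup C S) :
    (genusOf C S = g ∧ smallCount O C S = n) ↔ (IsFrob O C S f ∧ genusOf C S = g) := by
  constructor
  · rintro ⟨hgen, hsc⟩
    obtain ⟨F, hF⟩ := exists_isFrob O hS (hgen ▸ hg.ne')
    have hNF : NNum O C F = NNum O C f := by
      have := genusOf_add_smallCount hS hF
      omega
    obtain rfl := NNum_injOn O C ⟨hF.1.1, hF.ne_zero O hS⟩ ⟨hfC, hf0⟩ hNF
    exact ⟨hF, hgen⟩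
  · rintro ⟨hF, hgen⟩
    have := genusOf_add_smallCount hS hF
    exact ⟨hgen, by omega⟩

/-- If N(f) = g + n - 1 then a C-semigroup S satisfies g(S) = g and n(S) = n iff
Fb(S) = f and g(S) = g. -/
theorem statement3 (p : ℕ) (hp : 0 < p) (C : Set (Fin p → ℕ)) (hC : IsIntegerCone p C)
    (O : AdmissibleOrder p) (g n : ℕ) (hg : 0 < g) (hn : 0 < n)
    (f : Fin p → ℕ) (hfC : f ∈ C) (hf0 : f ≠ 0)
    (hNf : NNum O C f = g + n - 1)
    (S : Set (Fin p → ℕ)) (hS : IsCSemigroup C S) :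
    (genusOf C S = g ∧ smallCount O C S = n) ↔ (IsFrob O C S f ∧ genusOf C S = g) :=
  statement3_general p C O g n hg f hfC hf0 hNf S hS
end

section
/- Let C ⊆ ℕ^p be an integer cone, ⪯ an admissible total order on ℕ^p, f ∈ C \ {0}, and let S be a B-semigroup with respect to f such that S ≠ (C \ B(f)) ∪ {0}. Then S \ {α(S)} is again a B-semigroup with respect to f; in particular it is a C-semigroup with Frobenius element f. -/
open Set BigOperators

/-!
Since `α(S) ∈ B(f)`, say `α(S) + c = f` with `c ∈ C`, every nonzero summand `x` of a
decomposition `α(S) = x + y` in `S` again lies in `B(f)` (witnessed by `y + c`) and satisfies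
`x ⪯ α(S)`; minimality of `α(S)` forces `y = 0`. So `α(S)` is a minimal generator of `S`, and
removing it leaves a `C`-semigroup. The new gap `α(S) ⪯ f` keeps `f` the Frobenius element, and
as `α(S) ∈ B(f)`, `S \ {α(S)}` still contains `C \ B(f)`.
-/

theorem IsIntegerCone.add_mem {p : ℕ} {C : Set (Fin p → ℕ)} (hC : IsIntegerCone p C)
    {x y : Fin p → ℕ} (hx : x ∈ C) (hy : y ∈ C) : x + y ∈ C := by
  obtain ⟨A, rfl⟩ := hC
  obtain ⟨l, hl, hx⟩ := hx
  obtain ⟨m, hm, hy⟩ := hy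
  refine ⟨l + m, fun a => add_nonneg (hl a) (hm a), fun i => ?_⟩
  simp only [Pi.add_apply, Nat.cast_add, hx i, hy i, add_mul, Finset.sum_add_distrib]

namespace AdmissibleOrder

variable {p : ℕ} (O : AdmissibleOrder p)

theorem le_add_right (x y : Fin p → ℕ) : O.le x (x + y) := by
  simpa [add_comm] using O.add_right 0 y x (O.zero_le y)

theorem le_of_mem_BSet {C : Set (Fin p → ℕ)} {f x : Fin p → ℕ} (hx : x ∈ BSet C f) :
    O.le x f := by
  obtain ⟨-, y, -, rfl⟩ := hx
  exact O.le_add_right x y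

end AdmissibleOrder

section

variable {p : ℕ} {O : AdmissibleOrder p} {C S : Set (Fin p → ℕ)} {f a : Fin p → ℕ}

theorem IsAlpha.isLeast_of_ne (ha : IsAlpha O C S f a) (hSC : S ⊆ C) (h0 : 0 ∈ S)
    (hB : C \ BSet C f ⊆ S) (hne : S ≠ (C \ BSet C f) ∪ {0}) :
    a ∈ S ∧ a ≠ 0 ∧ a ∈ BSet C f ∧ ∀ x ∈ S, x ≠ 0 → x ∈ BSet C f → O.le a x := by
  refine ha.resolve_right fun ⟨hS0, _⟩ => hne ?_
  refine Subset.antisymm (fun x hx => ?_) (union_subset hB (singleton_subset_iff.2 h0))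
  by_cases hx0 : x = 0
  · exact Or.inr hx0
  · exact Or.inl ⟨hSC hx, fun hxB => hx0 (hS0 x ⟨hx, hxB⟩)⟩

theorem mem_msg_of_isLeast (hC : IsIntegerCone p C) (hSC : S ⊆ C) (haS : a ∈ S)
    (ha0 : a ≠ 0) (haB : a ∈ BSet C f)
    (hmin : ∀ x ∈ S, x ≠ 0 → x ∈ BSet C f → O.le a x) : a ∈ msg S := by
  obtain ⟨-, c, hc, hac⟩ := haB
  refine ⟨⟨haS, ha0⟩, ?_⟩
  rintro ⟨x, ⟨hxS, hx0⟩, y, ⟨hyS, hy0⟩, rfl⟩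
  have hxB : x ∈ BSet C f := ⟨hSC hxS, y + c, hC.add_mem (hSC hyS) hc, by rw [← add_assoc, hac]⟩
  have hx : x = x + y := O.le_antisymm _ _ (O.le_add_right x y) (hmin x hxS hx0 hxB)
  exact hy0 (add_eq_left.1 hx.symm)

theorem IsCSemigroup.diff_singleton_of_mem_msg (hS : IsCSemigroup C S) (ha : a ∈ msg S) :
    IsCSemigroup C (S \ {a}) := by
  obtain ⟨hSC, h0, hadd, hfin⟩ := hS
  obtain ⟨⟨-, ha0 : a ≠ 0⟩, hdec⟩ := ha
  refine ⟨sdiff_subset.trans hSC, ⟨h0, ha0.symm⟩, ?_, ?_⟩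
  · rintro x ⟨hxS, hxa : x ≠ a⟩ y ⟨hyS, hya : y ≠ a⟩
    refine ⟨hadd x hxS y hyS, fun hxy : x + y = a => ?_⟩
    by_cases hx0 : x = 0
    · exact hya (by simpa [hx0] using hxy)
    by_cases hy0 : y = 0
    · exact hxa (by simpa [hy0] using hxy)
    exact hdec ⟨x, ⟨hxS, hx0⟩, y, ⟨hyS, hy0⟩, hxy⟩
  · refine (hfin.union (finite_singleton a)).subset fun x ⟨hxC, hx⟩ => ?_
    by_cases hxa : x = a
    · exact Or.inr hxa
    · exact Or.inl ⟨hxC, fun hxS => hx ⟨hxS, hxa⟩⟩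

theorem IsFrob.diff_singleton (hS : IsFrob O C S f) (haf : O.le a f) :
    IsFrob O C (S \ {a}) f := by
  obtain ⟨⟨hfC, hfS⟩, hmax⟩ := hS
  refine ⟨⟨hfC, fun h => hfS h.1⟩, fun x ⟨hxC, hx⟩ => ?_⟩
  by_cases hxa : x = a
  · exact hxa ▸ haf
  · exact hmax x ⟨hxC, fun hxS => hx ⟨hxS, hxa⟩⟩

end

theorem statement4_general (p : ℕ) (C : Set (Fin p → ℕ)) (hC : IsIntegerCone p C)
    (O : AdmissibleOrder p) (f : Fin p → ℕ)
    (S : Set (Fin p → ℕ)) (hS : IsBSemigroup O C S f)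
    (hne : S ≠ (C \ BSet C f) ∪ {0})
    (a : Fin p → ℕ) (ha : IsAlpha O C S f a) :
    IsBSemigroup O C (S \ {a}) f := by
  obtain ⟨hCS, hFrob, hB⟩ := hS
  obtain ⟨haS, ha0, haB, hmin⟩ := ha.isLeast_of_ne hCS.1 hCS.2.1 hB hne
  refine ⟨hCS.diff_singleton_of_mem_msg (mem_msg_of_isLeast hC hCS.1 haS ha0 haB hmin),
    hFrob.diff_singleton (O.le_of_mem_BSet haB), fun x hx => ⟨hB hx, ?_⟩⟩
  rintro rfl
  exact hx.2 haB

/-- If S is a B-semigroup with respect to f and S ≠ (C \ B(f)) ∪ {0}, then S \ {α(S)}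
is again a B-semigroup with respect to f. -/
theorem statement4 (p : ℕ) (hp : 0 < p) (C : Set (Fin p → ℕ)) (hC : IsIntegerCone p C)
    (O : AdmissibleOrder p) (f : Fin p → ℕ) (hfC : f ∈ C) (hf0 : f ≠ 0)
    (S : Set (Fin p → ℕ)) (hS : IsBSemigroup O C S f)
    (hne : S ≠ (C \ BSet C f) ∪ {0})
    (a : Fin p → ℕ) (ha : IsAlpha O C S f a) :
    IsBSemigroup O C (S \ {a}) f :=
  statement4_general p C hC O f S hS hne a ha
end

section
/- Let C ⊆ ℕ^p be an integer cone, ⪯ an admissible total order on ℕ^p, f ∈ C \ {0}, and g a positive integer. Then there exists a B-semigroup with respect to f having genus g if and only if ⌈#B(f)/2⌉ ≤ g ≤ #B(f) − 1. -/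
open Set BigOperators

namespace Stmt6Aux

variable {p : ℕ}

lemma cone_zero {C : Set (Fin p → ℕ)} (hC : IsIntegerCone p C) : (0 : Fin p → ℕ) ∈ C := by
  obtain ⟨A, rfl⟩ := hC
  exact ⟨fun _ => 0, fun a => le_refl 0, fun i => by simp⟩

lemma cone_add {C : Set (Fin p → ℕ)} (hC : IsIntegerCone p C) :
    ∀ x ∈ C, ∀ y ∈ C, x + y ∈ C := by
  obtain ⟨A, rfl⟩ := hC
  rintro x ⟨l, hl, hx⟩ y ⟨m, hm, hy⟩
  refine ⟨fun a => l a + m a, fun a => add_nonneg (hl a) (hm a), fun i => ?_⟩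
  simp only [Pi.add_apply, Nat.cast_add, hx i, hy i, add_mul, Finset.sum_add_distrib]

lemma cancel (O : AdmissibleOrder p) {x y z : Fin p → ℕ} (h : O.le (x + z) (y + z)) :
    O.le x y := by
  rcases O.le_total x y with h' | h'
  · exact h'
  · have h2 := O.add_right y x z h'
    have h3 := O.le_antisymm _ _ h h2
    have hxy : x = y := by
      funext i
      have h4 := congrFun h3 i
      simp only [Pi.add_apply] at h4
      omega
    exact hxy ▸ O.le_refl x

lemma cancel' (O : AdmissibleOrder p) {x a b : Fin p → ℕ} (h : O.le (x + a) (x + b)) :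
    O.le a b := by
  apply cancel O (z := x)
  rwa [add_comm a x, add_comm b x]

lemma le_add (O : AdmissibleOrder p) (x y : Fin p → ℕ) : O.le x (x + y) := by
  have h := O.add_right 0 y x (O.zero_le y)
  rw [zero_add, add_comm y x] at h
  exact h

lemma antitone_aux (O : AdmissibleOrder p) {x z a b f : Fin p → ℕ}
    (ha : x + a = f) (hb : z + b = f) (h : O.le x z) : O.le b a := by
  apply cancel' O (x := x)
  have h1 : O.le (x + b) (z + b) := O.add_right x z b h
  rw [hb, ← ha] at h1
  exact h1

lemma finset_min (O : AdmissibleOrder p) (t : Finset (Fin p → ℕ)) (ht : t.Nonempty) :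
    ∃ m ∈ t, ∀ x ∈ t, O.le m x := by
  classical
  induction t using Finset.induction_on with
  | empty => exact absurd ht (by simp)
  | @insert a s ha ih =>
    rcases s.eq_empty_or_nonempty with rfl | hs
    · refine ⟨a, Finset.mem_insert_self a ∅, ?_⟩
      intro x hx
      simp only [Finset.mem_insert, Finset.notMem_empty, or_false] at hx
      exact hx ▸ O.le_refl a
    · obtain ⟨m, hm, hmin⟩ := ih hs
      rcases O.le_total a m with hle | hle
      · refine ⟨a, Finset.mem_insert_self a s, ?_⟩
        intro x hx
        rcases Finset.mem_insert.1 hx with rfl | hx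
        · exact O.le_refl x
        · exact O.le_trans _ _ _ hle (hmin x hx)
      · refine ⟨m, Finset.mem_insert_of_mem hm, ?_⟩
        intro x hx
        rcases Finset.mem_insert.1 hx with rfl | hx
        · exact hle
        · exact hmin x hx

lemma set_min (O : AdmissibleOrder p) {s : Set (Fin p → ℕ)} (hf : s.Finite)
    (hne : s.Nonempty) : ∃ m ∈ s, ∀ x ∈ s, O.le m x := by
  obtain ⟨m, hm, hmin⟩ := finset_min O hf.toFinset (by simpa using hne)
  exact ⟨m, by simpa using hm, fun x hx => hmin x (by simpa using hx)⟩

lemma exists_initial (O : AdmissibleOrder p) {M : Set (Fin p → ℕ)} (hM : M.Finite) :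
    ∀ k, k ≤ M.ncard →
    ∃ L, L ⊆ M ∧ L.ncard = k ∧ (∀ x ∈ M, ∀ l ∈ L, O.le x l → x ∈ L) := by
  intro k
  induction k with
  | zero => exact fun _ => ⟨∅, by simp, by simp, by simp⟩
  | succ k ih =>
    intro hk
    obtain ⟨L, hLM, hLc, hdown⟩ := ih (Nat.le_of_succ_le hk)
    have hLfin : L.Finite := hM.subset hLM
    have hne : (M \ L).Nonempty := by
      apply Set.nonempty_of_ncard_ne_zero
      rw [Set.ncard_diff hLM hLfin]
      omega
    obtain ⟨m, hm, hmin⟩ := set_min O hM.diff hne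
    refine ⟨insert m L, Set.insert_subset hm.1 hLM, ?_, ?_⟩
    · rw [Set.ncard_insert_of_notMem hm.2 hLfin, hLc]
    · intro x hx l hl hxl
      rcases Set.mem_insert_iff.1 hl with rfl | hl
      · by_cases hxL : x ∈ L
        · exact Set.mem_insert_of_mem _ hxL
        · have h2 := hmin x ⟨hx, hxL⟩
          have hxm : x = l := O.le_antisymm _ _ hxl h2
          exact hxm ▸ Set.mem_insert _ _
      · exact Set.mem_insert_of_mem _ (hdown x hx l hl hxl)

lemma B_le (O : AdmissibleOrder p) (C : Set (Fin p → ℕ)) (f : Fin p → ℕ) {x : Fin p → ℕ} (hx : x ∈ BSet C f) : O.le x f := by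
  obtain ⟨hxC, y, hyC, hxy⟩ := hx
  have h := le_add O x y
  rwa [hxy] at h

lemma B_fin (O : AdmissibleOrder p) (C : Set (Fin p → ℕ)) (f : Fin p → ℕ) :
    (BSet C f).Finite :=
  (O.finite_le f).subset fun x hx => B_le O C f hx

lemma B_sub (C : Set (Fin p → ℕ)) (f : Fin p → ℕ) {x : Fin p → ℕ} (hx : x ∈ BSet C f) : x + (f - x) = f ∧ (f - x) ∈ C := by
  obtain ⟨hxC, y, hyC, hxy⟩ := hx
  have hy : y = f - x := by
    funext i
    have h := congrFun hxy i
    simp only [Pi.add_apply] at h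
    simp only [Pi.sub_apply]
    omega
  exact ⟨by rw [← hy]; exact hxy, by rw [← hy]; exact hyC⟩

lemma B_sigma_mem (C : Set (Fin p → ℕ)) (f : Fin p → ℕ) {x : Fin p → ℕ} (hx : x ∈ BSet C f) : (f - x) ∈ BSet C f := by
  obtain ⟨hsum, hmemC⟩ := B_sub C f hx
  exact ⟨hmemC, x, hx.1, by rw [add_comm]; exact hsum⟩

lemma sigma_sigma (C : Set (Fin p → ℕ)) (f : Fin p → ℕ) {x : Fin p → ℕ} (hx : x ∈ BSet C f) : f - (f - x) = x := by
  obtain ⟨hsum, _⟩ := B_sub C f hx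
  funext i
  have h := congrFun hsum i
  simp only [Pi.add_apply, Pi.sub_apply] at h
  simp only [Pi.sub_apply]
  omega

lemma sigma_antitone (O : AdmissibleOrder p) (C : Set (Fin p → ℕ)) (f : Fin p → ℕ) {x z : Fin p → ℕ} (hx : x ∈ BSet C f) (hz : z ∈ BSet C f)
    (h : O.le x z) : O.le (f - z) (f - x) :=
  antitone_aux O (B_sub C f hx).1 (B_sub C f hz).1 h

lemma forward_bounds (O : AdmissibleOrder p) {C S : Set (Fin p → ℕ)} {f : Fin p → ℕ}
    (h0C : (0 : Fin p → ℕ) ∈ C) (hB : IsBSemigroup O C S f) :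
    ((BSet C f).ncard + 1) / 2 ≤ (C \ S).ncard ∧ (C \ S).ncard ≤ (BSet C f).ncard - 1 := by
  obtain ⟨⟨hSC, h0S, hclosed, hGfin⟩, ⟨⟨hfC', hfS'⟩, hFrobMax⟩, hCB⟩ := hB
  have hBfin : (BSet C f).Finite := B_fin O C f
  have h0B : (0 : Fin p → ℕ) ∈ BSet C f := ⟨h0C, f, hfC', zero_add f⟩
  have hGB : C \ S ⊆ BSet C f \ {0} := by
    rintro x ⟨hxC, hxS⟩
    refine ⟨?_, ?_⟩
    · by_contra hxB
      exact hxS (hCB ⟨hxC, hxB⟩)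
    · simp only [Set.mem_singleton_iff]
      rintro rfl
      exact hxS h0S
  constructor
  · -- lower bound
    have hGeq : C \ S = BSet C f \ S := by
      apply Set.Subset.antisymm
      · intro x hx
        exact ⟨(hGB hx).1, hx.2⟩
      · intro x hx
        exact ⟨hx.1.1, hx.2⟩
    have hsplit : (BSet C f ∩ S).ncard + (C \ S).ncard = (BSet C f).ncard := by
      rw [hGeq]
      exact Set.ncard_inter_add_ncard_diff_eq_ncard (BSet C f) S hBfin
    have hinj : (BSet C f ∩ S).ncard ≤ (C \ S).ncard := by
      refine Set.ncard_le_ncard_of_injOn (fun x => f - x) ?_ ?_ hGfin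
      · rintro x ⟨hxB, hxS⟩
        refine ⟨(B_sub C f hxB).2, ?_⟩
        intro hmem
        apply hfS'
        have h := hclosed x hxS (f - x) hmem
        rwa [(B_sub C f hxB).1] at h
      · rintro x ⟨hxB, _⟩ y ⟨hyB, _⟩ hxy
        have h1 := sigma_sigma C f hxB
        have h2 := sigma_sigma C f hyB
        simp only at hxy
        have hxy' : f - x = f - y := hxy
        rw [← h1, ← h2, hxy']
    omega
  · -- upper bound
    have h1 : (C \ S).ncard ≤ (BSet C f \ {0}).ncard :=
      Set.ncard_le_ncard hGB hBfin.diff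
    have h2 : (BSet C f \ {0}).ncard = (BSet C f).ncard - 1 :=
      Set.ncard_diff_singleton_of_mem h0B
    omega

lemma construct (O : AdmissibleOrder p) {C : Set (Fin p → ℕ)} {f : Fin p → ℕ}
    (hadd : ∀ x ∈ C, ∀ y ∈ C, x + y ∈ C) (h0C : (0 : Fin p → ℕ) ∈ C)
    (hfC : f ∈ C) (hf0 : f ≠ 0) {g : ℕ} (hg : 0 < g)
    (h1 : ((BSet C f).ncard + 1) / 2 ≤ g) (h2 : g ≤ (BSet C f).ncard - 1) :
    ∃ S : Set (Fin p → ℕ), IsBSemigroup O C S f ∧ genusOf C S = g := by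
  classical
  set B := BSet C f with hBdef
  have hBfin : B.Finite := B_fin O C f
  have h0B : (0 : Fin p → ℕ) ∈ B := ⟨h0C, f, hfC, zero_add f⟩
  have hfB : f ∈ B := ⟨hfC, 0, h0C, add_zero f⟩
  set n := B.ncard with hndef
  have hn2 : 2 ≤ n := by
    have hsub : ({0, f} : Set (Fin p → ℕ)) ⊆ B := by
      rintro x (rfl | rfl)
      · exact h0B
      · exact hfB
    have := Set.ncard_le_ncard hsub hBfin
    rwa [Set.ncard_pair (Ne.symm hf0)] at this
  set M := B \ {0, f} with hMdef
  have hMfin : M.Finite := hBfin.diff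
  have hMcard : M.ncard = n - 2 := by
    have hsub : ({0, f} : Set (Fin p → ℕ)) ⊆ B := by
      rintro x (rfl | rfl)
      · exact h0B
      · exact hfB
    rw [hMdef, Set.ncard_diff hsub (by exact (Set.finite_singleton f).insert 0),
      Set.ncard_pair (Ne.symm hf0)]
  have hfM : f ∉ M := fun h => h.2 (Or.inr rfl)
  have h0M : (0 : Fin p → ℕ) ∉ M := fun h => h.2 (Or.inl rfl)
  -- M is closed under x ↦ f - x
  have hff : f - f = (0 : Fin p → ℕ) := by
    funext i; simp
  have hf0' : f - (0 : Fin p → ℕ) = f := by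
    funext i; simp
  have hMσ : ∀ x ∈ M, f - x ∈ M := by
    rintro x ⟨hxB, hx01⟩
    simp only [Set.mem_insert_iff, Set.mem_singleton_iff, not_or] at hx01
    obtain ⟨hx0, hxf⟩ := hx01
    refine ⟨B_sigma_mem C f hxB, ?_⟩
    simp only [Set.mem_insert_iff, Set.mem_singleton_iff, not_or]
    constructor
    · intro h
      apply hxf
      have := sigma_sigma C f hxB
      rw [h, hf0'] at this
      exact this.symm
    · intro h
      apply hx0
      have := sigma_sigma C f hxB
      rw [h, hff] at this
      exact this.symm
  -- initial segment
  obtain ⟨L, hLM, hLc, hdown⟩ := exists_initial O hMfin (g - 1) (by omega)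
  have hLfin : L.Finite := hMfin.subset hLM
  have hfL : f ∉ L := fun h => hfM (hLM h)
  set G := insert f L with hGdef
  have hGB : G ⊆ B := by
    rintro x (rfl | hx)
    · exact hfB
    · exact (hLM hx).1
  have hGC : G ⊆ C := fun x hx => (hGB hx).1
  have h0G : (0 : Fin p → ℕ) ∉ G := by
    rintro (h | h)
    · exact hf0 h.symm
    · exact h0M (hLM h)
  -- the key counting lemma
  have key : ∀ x ∈ M, x ∉ L → (f - x) ∉ L → O.le x (f - x) → False := by
    intro x hxM hxL hsxL hord
    have hxB : x ∈ B := hxM.1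
    set A1 := {z | z ∈ M ∧ O.le z x ∧ z ≠ x} with hA1def
    set A2 := {z | z ∈ M ∧ O.le (f - x) z ∧ z ≠ f - x} with hA2def
    have hA1fin : A1.Finite := hMfin.subset fun z hz => hz.1
    have hA2fin : A2.Finite := hMfin.subset fun z hz => hz.1
    have hL_A1 : L ⊆ A1 := by
      intro l hl
      refine ⟨hLM hl, ?_, ?_⟩
      · rcases O.le_total l x with h | h
        · exact h
        · exact absurd (hdown x hxM l hl h) hxL
      · rintro rfl
        exact hxL hl
    have himg : (fun z => f - z) '' A1 = A2 := by
      ext w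
      constructor
      · rintro ⟨z, ⟨hzM, hzx, hzne⟩, hw⟩
        have hwz : f - z = w := hw
        subst hwz
        refine ⟨hMσ z hzM, sigma_antitone O C f hzM.1 hxB hzx, ?_⟩
        intro heq
        apply hzne
        rw [← sigma_sigma C f hzM.1, heq, sigma_sigma C f hxB]
      · rintro ⟨hwM, hw1, hw2⟩
        refine ⟨f - w, ⟨hMσ w hwM, ?_, ?_⟩, sigma_sigma C f hwM.1⟩
        · have h := sigma_antitone O C f (B_sigma_mem C f hxB) hwM.1 hw1
          rwa [sigma_sigma C f hxB] at h
        · intro heq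
          apply hw2
          rw [← sigma_sigma C f hwM.1, heq]
    have hA2card : A2.ncard = A1.ncard := by
      rw [← himg]
      apply Set.ncard_image_of_injOn
      rintro z ⟨hzM, _, _⟩ z' ⟨hz'M, _, _⟩ hzz'
      have hzz2 : f - z = f - z' := hzz'
      rw [← sigma_sigma C f hzM.1, ← sigma_sigma C f hz'M.1, hzz2]
    have hx12 : x ∉ A1 ∪ A2 := by
      rintro (⟨_, _, hne⟩ | ⟨_, hle, hne⟩)
      · exact hne rfl
      · exact hne (O.le_antisymm _ _ hord hle)
    have hdisj : Disjoint A1 A2 := by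
      rw [Set.disjoint_left]
      rintro z ⟨_, hzx, hzne⟩ ⟨_, hsz, _⟩
      apply hzne
      exact O.le_antisymm _ _ hzx (O.le_trans _ _ _ hord hsz)
    have hsubM : insert x (A1 ∪ A2) ⊆ M := by
      rintro z (rfl | (hz | hz))
      · exact hxM
      · exact hz.1
      · exact hz.1
    have hcount : A1.ncard + A2.ncard + 1 ≤ M.ncard := by
      have e1 : (insert x (A1 ∪ A2)).ncard = A1.ncard + A2.ncard + 1 := by
        rw [Set.ncard_insert_of_notMem hx12 (hA1fin.union hA2fin),
          Set.ncard_union_eq hdisj hA1fin hA2fin]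
      rw [← e1]
      exact Set.ncard_le_ncard hsubM hMfin
    have hLA1 : g - 1 ≤ A1.ncard := by
      have := Set.ncard_le_ncard hL_A1 hA1fin
      omega
    omega
  -- the semigroup
  refine ⟨C \ G, ⟨⟨Set.diff_subset, ⟨h0C, h0G⟩, ?_, ?_⟩, ⟨⟨hfC, fun h => h.2 (Set.mem_insert f L)⟩, ?_⟩, ?_⟩, ?_⟩
  · -- closure
    rintro x ⟨hxC, hxG⟩ y ⟨hyC, hyG⟩
    refine ⟨hadd x hxC y hyC, ?_⟩
    intro hxyG
    rcases Set.mem_insert_iff.1 hxyG with hxyf | hxyL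
    · -- x + y = f
      by_cases hx0 : x = 0
      · subst hx0
        rw [zero_add] at hxyf
        exact hyG (hxyf ▸ Set.mem_insert f L)
      by_cases hy0 : y = 0
      · subst hy0
        rw [add_zero] at hxyf
        exact hxG (hxyf ▸ Set.mem_insert f L)
      have hxB : x ∈ B := ⟨hxC, y, hyC, hxyf⟩
      have hyB : y ∈ B := ⟨hyC, x, hxC, by rw [add_comm]; exact hxyf⟩
      have hxf : x ≠ f := by
        rintro rfl
        apply hy0
        funext i
        have h := congrFun hxyf i
        simp only [Pi.add_apply] at h
        simp only [Pi.zero_apply]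
        omega
      have hyf : y ≠ f := by
        rintro rfl
        apply hx0
        funext i
        have h := congrFun hxyf i
        simp only [Pi.add_apply] at h
        simp only [Pi.zero_apply]
        omega
      have hxM : x ∈ M := ⟨hxB, by simp [hx0, hxf]⟩
      have hyM : y ∈ M := ⟨hyB, by simp [hy0, hyf]⟩
      have hyσ : y = f - x := by
        funext i
        have h := congrFun hxyf i
        simp only [Pi.add_apply] at h
        simp only [Pi.sub_apply]
        omega
      have hxσ : x = f - y := by
        funext i
        have h := congrFun hxyf i
        simp only [Pi.add_apply] at h
        simp only [Pi.sub_apply]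
        omega
      have hxL : x ∉ L := fun h => hxG (Set.mem_insert_of_mem f h)
      have hyL : y ∉ L := fun h => hyG (Set.mem_insert_of_mem f h)
      rcases O.le_total x (f - x) with hord | hord
      · exact key x hxM hxL (hyσ ▸ hyL) hord
      · refine key y hyM hyL (hxσ ▸ hxL) ?_
        rw [← hxσ, hyσ]
        exact hord
    · -- x + y ∈ L
      by_cases hx0 : x = 0
      · subst hx0
        rw [zero_add] at hxyL
        exact hyG (Set.mem_insert_of_mem f hxyL)
      by_cases hy0 : y = 0
      · subst hy0
        rw [add_zero] at hxyL
        exact hxG (Set.mem_insert_of_mem f hxyL)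
      have hxyM : x + y ∈ M := hLM hxyL
      have hxyB : x + y ∈ B := hxyM.1
      have hxB : x ∈ B := by
        obtain ⟨hC', w, hwC, hw⟩ := hxyB
        exact ⟨hxC, y + w, hadd y hyC w hwC, by rw [← add_assoc]; exact hw⟩
      have hxlexy : O.le x (x + y) := le_add O x y
      have hxf : x ≠ f := by
        intro hxf'
        have hxyle : O.le (x + y) f := B_le O C f hxyB
        rw [← hxf'] at hxyle
        have heq := O.le_antisymm _ _ hxlexy hxyle
        apply hy0
        funext i
        have h := congrFun heq i
        simp only [Pi.add_apply] at h
        simp only [Pi.zero_apply]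
        omega
      have hxM : x ∈ M := ⟨hxB, by simp [hx0, hxf]⟩
      have hxL : x ∈ L := hdown x hxM (x + y) hxyL hxlexy
      exact hxG (Set.mem_insert_of_mem f hxL)
  · -- finite complement
    have heq : C \ (C \ G) = G := Set.diff_diff_cancel_left hGC
    rw [heq]
    exact hLfin.insert f
  · -- Frobenius max
    intro x hx
    have heq : C \ (C \ G) = G := Set.diff_diff_cancel_left hGC
    rw [heq] at hx
    exact B_le O C f (hGB hx)
  · -- C \ B ⊆ S
    rintro x ⟨hxC, hxB⟩
    exact ⟨hxC, fun h => hxB (hGB h)⟩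
  · -- genus
    have heq : C \ (C \ G) = G := Set.diff_diff_cancel_left hGC
    rw [genusOf, heq, hGdef, Set.ncard_insert_of_notMem hfL hLfin, hLc]
    omega

end Stmt6Aux

/-- There exists a B-semigroup with respect to f having genus g iff
⌈#B(f)/2⌉ ≤ g ≤ #B(f) - 1. -/
theorem statement6 (p : ℕ) (hp : 0 < p) (C : Set (Fin p → ℕ)) (hC : IsIntegerCone p C)
    (O : AdmissibleOrder p) (f : Fin p → ℕ) (hfC : f ∈ C) (hf0 : f ≠ 0)
    (g : ℕ) (hg : 0 < g) :
    (∃ S : Set (Fin p → ℕ), IsBSemigroup O C S f ∧ genusOf C S = g) ↔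
      (((BSet C f).ncard + 1) / 2 ≤ g ∧ g ≤ (BSet C f).ncard - 1) := by
  constructor
  · rintro ⟨S, hS, rfl⟩
    exact Stmt6Aux.forward_bounds O (Stmt6Aux.cone_zero hC) hS
  · rintro ⟨h1, h2⟩
    exact Stmt6Aux.construct O (Stmt6Aux.cone_add hC) (Stmt6Aux.cone_zero hC) hfC hf0 hg h1 h2
end

section
/- Let C = ℕ^p, let ⪯ be an admissible total order on ℕ^p, let f = (f_1, …, f_p) ∈ ℕ^p \ {0}, and let g be a positive integer. Then there exists a B-semigroup with respect to f having genus g if and only if ⌈(∏_{i=1}^p (f_i + 1))/2⌉ ≤ g < ∏_{i=1}^p (f_i + 1). -/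
open Set BigOperators

namespace Aux

variable {p : ℕ} (O : AdmissibleOrder p)

lemma add_cancel {a b c : Fin p → ℕ} (h : a + c = b + c) : a = b := by
  funext i; have := congrFun h i; simp only [Pi.add_apply] at this; omega

lemma le_cancel {a b c : Fin p → ℕ} (h : O.le (a + c) (b + c)) : O.le a b := by
  rcases O.le_total a b with h' | h'
  · exact h'
  · have := O.le_antisymm _ _ h (O.add_right _ _ _ h')
    rw [add_cancel this]; exact O.le_refl b

lemma le_add_self (a b : Fin p → ℕ) : O.le a (a + b) := by
  have := O.add_right 0 b a (O.zero_le b)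
  rwa [zero_add, add_comm b a] at this

lemma max_of_finite (M : Set (Fin p → ℕ)) (hM : M.Finite) :
    M.Nonempty → ∃ m ∈ M, ∀ y ∈ M, O.le y m := by
  refine Set.Finite.induction_on
    (motive := fun s _ => s.Nonempty → ∃ m ∈ s, ∀ y ∈ s, O.le y m) M hM (by simp) ?_
  intro a s ha hs ih _
  rcases s.eq_empty_or_nonempty with rfl | hsne
  · exact ⟨a, by simp, by simpa using O.le_refl a⟩
  · obtain ⟨m, hm, hmax⟩ := ih hsne
    rcases O.le_total a m with h | h
    · exact ⟨m, Or.inr hm, by rintro y (rfl | hy); exact h; exact hmax y hy⟩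
    · exact ⟨a, Or.inl rfl, by
        rintro y (rfl | hy)
        · exact O.le_refl _
        · exact O.le_trans _ _ _ (hmax y hy) h⟩

lemma upset_exists (M : Set (Fin p → ℕ)) (hM : M.Finite) :
    ∀ k, k ≤ M.ncard → ∃ T ⊆ M, T.ncard = k ∧
      (∀ x ∈ T, ∀ y ∈ M, O.le x y → y ∈ T) := by
  intro k
  induction k with
  | zero => exact fun _ => ⟨∅, by simp⟩
  | succ k ih =>
    intro hk
    obtain ⟨T, hTM, hcard, hup⟩ := ih (le_of_lt hk)
    have hTfin : T.Finite := hM.subset hTM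
    have hne : (M \ T).Nonempty := by
      rw [Set.diff_nonempty]
      intro hMT
      have := Set.ncard_le_ncard hMT hTfin
      omega
    obtain ⟨m, hm, hmax⟩ := max_of_finite O (M \ T) hM.diff hne
    refine ⟨insert m T, ?_, ?_, ?_⟩
    · exact Set.insert_subset hm.1 hTM
    · rw [Set.ncard_insert_of_notMem hm.2 hTfin, hcard]
    · rintro x (rfl | hx) y hy hxy
      · by_cases hyT : y ∈ T
        · exact Or.inr hyT
        · exact Or.inl (O.le_antisymm _ _ (hmax y ⟨hy, hyT⟩) hxy)
      · exact Or.inr (hup x hx y hy hxy)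

variable (f : Fin p → ℕ)

/-- the box `{x : x ≤ f}` -/
def box : Set (Fin p → ℕ) := {x | ∀ i, x i ≤ f i}

lemma BSet_univ : BSet (Set.univ : Set (Fin p → ℕ)) f = box f := by
  ext x
  simp only [BSet, box, Set.mem_univ, true_and, Set.mem_setOf_eq, exists_prop]
  constructor
  · rintro ⟨y, rfl⟩ i; simp
  · intro h
    exact ⟨f - x, by funext i; simp only [Pi.add_apply, Pi.sub_apply]; have := h i; omega⟩

lemma box_eq : box f = ↑(Fintype.piFinset fun i => Finset.Iic (f i)) := by
  ext x; simp [Fintype.mem_piFinset, box, Pi.le_def]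

lemma box_finite : (box f).Finite := by
  rw [box_eq]; exact (Fintype.piFinset fun i => Finset.Iic (f i)).finite_toSet

lemma box_ncard : (box f).ncard = ∏ i, (f i + 1) := by
  rw [box_eq, Set.ncard_coe_finset, Fintype.card_piFinset]
  simp [Nat.card_Iic]

lemma zero_mem_box : 0 ∈ box f := fun i => Nat.zero_le _

lemma f_mem_box : f ∈ box f := fun i => le_refl _

lemma sub_add_of_box {x : Fin p → ℕ} (hx : x ∈ box f) : x + (f - x) = f := by
  funext i; have := hx i; simp only [Pi.add_apply, Pi.sub_apply]; omega

lemma sub_mem_box {x : Fin p → ℕ} (_ : x ∈ box f) : f - x ∈ box f := by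
  intro i; simp only [Pi.sub_apply]; omega

lemma box_inj : Set.InjOn (fun x => f - x) (box f) := by
  intro x hx y hy h
  funext i
  have := congrFun h i
  have hx' := hx i; have hy' := hy i
  simp only [Pi.sub_apply] at this
  omega

lemma le_f_of_box {x : Fin p → ℕ} (hx : x ∈ box f) : O.le x f := by
  have := le_add_self O x (f - x)
  rwa [sub_add_of_box f hx] at this

end Aux


/-- For C = ℕ^p: there exists a B-semigroup with respect to f having genus g iff
⌈(∏ (f_i + 1))/2⌉ ≤ g < ∏ (f_i + 1). -/
theorem statement7 (p : ℕ) (hp : 0 < p) (O : AdmissibleOrder p)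
    (f : Fin p → ℕ) (hf0 : f ≠ 0) (g : ℕ) (hg : 0 < g) :
    (∃ S : Set (Fin p → ℕ), IsBSemigroup O Set.univ S f ∧ genusOf Set.univ S = g) ↔
      (((∏ i, (f i + 1)) + 1) / 2 ≤ g ∧ g < ∏ i, (f i + 1)) := by
  have hbfin := Aux.box_finite f
  have hbN : (Aux.box f).ncard = ∏ i, (f i + 1) := Aux.box_ncard f
  have hboxmem : ∀ x y : Fin p → ℕ, x + y ∈ Aux.box f → x ∈ Aux.box f ∧ y ∈ Aux.box f := by
    intro x y h
    constructor <;> intro i <;> have := h i <;> simp only [Pi.add_apply] at this <;> omega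
  constructor
  · rintro ⟨S, ⟨⟨-, h0S, hadd, -⟩, ⟨⟨-, hfS⟩, hmax⟩, hcompl⟩, rfl⟩
    have hgaps_box : Set.univ \ S ⊆ Aux.box f := by
      intro x hx
      by_contra hxb
      exact hx.2 (hcompl ⟨trivial, by rwa [Aux.BSet_univ]⟩)
    have hgfin : (Set.univ \ S).Finite := hbfin.subset hgaps_box
    set K := Aux.box f ∩ S with hK
    have hKfin : K.Finite := hbfin.subset Set.inter_subset_left
    have hKj : (fun x => f - x) '' K ⊆ Set.univ \ S := by
      rintro _ ⟨x, ⟨hxb, hxS⟩, rfl⟩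
      refine ⟨trivial, fun hfx => ?_⟩
      have hsum : x + (f - x) ∈ S := hadd x hxS _ hfx
      rw [Aux.sub_add_of_box f hxb] at hsum
      exact hfS hsum
    have hK1 : K.ncard ≤ (Set.univ \ S).ncard := by
      rw [← Set.ncard_image_of_injOn ((Aux.box_inj f).mono Set.inter_subset_left)]
      exact Set.ncard_le_ncard hKj hgfin
    have hsplit : (Aux.box f).ncard = K.ncard + (Set.univ \ S).ncard := by
      have hcup : Aux.box f = K ∪ (Set.univ \ S) := by
        ext x
        constructor
        · intro hx
          by_cases hxS : x ∈ S
          · exact Or.inl ⟨hx, hxS⟩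
          · exact Or.inr ⟨trivial, hxS⟩
        · rintro (⟨h, -⟩ | h)
          · exact h
          · exact hgaps_box h
      have hdisj : Disjoint K (Set.univ \ S) :=
        Set.disjoint_left.mpr fun x hx h => h.2 hx.2
      rw [hcup, Set.ncard_union_eq hdisj hKfin hgfin]
    have h0g : 0 ∉ Set.univ \ S := fun h => h.2 h0S
    have hle : (Set.univ \ S).ncard ≤ (Aux.box f \ {0}).ncard :=
      Set.ncard_le_ncard (Set.subset_diff_singleton hgaps_box h0g) hbfin.diff
    rw [Set.ncard_diff_singleton_of_mem (Aux.zero_mem_box f)] at hle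
    unfold genusOf at hg ⊢
    omega
  · rintro ⟨hlow, hhigh⟩
    set N := ∏ i, (f i + 1) with hN
    set M : Set (Fin p → ℕ) :=
      {x | x ∈ Aux.box f ∧ x ≠ 0 ∧ x ≠ f ∧ O.lt f (x + x)} with hMdef
    set P : Set (Fin p → ℕ) :=
      {x | x ∈ Aux.box f ∧ x ≠ 0 ∧ x ≠ f ∧ O.le (x + x) f} with hPdef
    have hMfin : M.Finite := hbfin.subset fun x hx => hx.1
    have hPfin : P.Finite := hbfin.subset fun x hx => hx.1
    have hpair_sub : ({0, f} : Set (Fin p → ℕ)) ⊆ Aux.box f := by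
      rintro x (rfl | h)
      · exact Aux.zero_mem_box f
      · rw [Set.mem_singleton_iff] at h
        rw [h]; exact Aux.f_mem_box f
    have hMP : M ∪ P = Aux.box f \ {0, f} := by
      ext x
      simp only [Set.mem_union, hMdef, hPdef, Set.mem_setOf_eq, Set.mem_diff,
        Set.mem_insert_iff, Set.mem_singleton_iff]
      constructor
      · rintro (⟨h1, h2, h3, -⟩ | ⟨h1, h2, h3, -⟩) <;> exact ⟨h1, by tauto⟩
      · rintro ⟨h1, h2⟩
        push_neg at h2
        by_cases hfx : O.le (x + x) f
        · exact Or.inr ⟨h1, h2.1, h2.2, hfx⟩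
        · refine Or.inl ⟨h1, h2.1, h2.2, ?_, fun he => hfx (he ▸ O.le_refl f)⟩
          rcases O.le_total (x + x) f with h | h
          · exact absurd h hfx
          · exact h
    have hdisjMP : Disjoint M P := by
      rw [Set.disjoint_left]
      rintro x ⟨-, -, -, hlt⟩ ⟨-, -, -, hle'⟩
      exact hlt.2 (O.le_antisymm _ _ hlt.1 hle')
    have hcard2 : (Aux.box f \ {0, f}).ncard = N - 2 := by
      rw [Set.ncard_diff hpair_sub (Set.toFinite _), hbN,
        Set.ncard_pair (Ne.symm hf0)]
    have hMPcard : M.ncard + P.ncard = N - 2 := by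
      rw [← Set.ncard_union_eq hdisjMP hMfin hPfin, hMP, hcard2]
    -- bound on P
    have hPbound : 2 * P.ncard ≤ N - 1 := by
      set jP := (fun x => f - x) '' P with hjP
      have hjPcard : jP.ncard = P.ncard :=
        Set.ncard_image_of_injOn ((Aux.box_inj f).mono fun x hx => hx.1)
      have hjPfin : jP.Finite := hPfin.image _
      have hjPsub : jP ⊆ Aux.box f \ {0, f} := by
        rintro _ ⟨x, hx, rfl⟩
        refine ⟨Aux.sub_mem_box f hx.1, ?_⟩
        simp only [Set.mem_insert_iff, Set.mem_singleton_iff]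
        push_neg
        constructor
        · intro h0
          apply hx.2.2.1
          funext i
          have h1 := congrFun h0 i
          have h2 := hx.1 i
          simp only [Pi.sub_apply, Pi.zero_apply] at h1 ⊢
          omega
        · intro h0
          apply hx.2.1
          funext i
          have h1 := congrFun h0 i
          have h2 := hx.1 i
          simp only [Pi.sub_apply, Pi.zero_apply] at h1 ⊢
          omega
      have hPsub : P ⊆ Aux.box f \ {0, f} := by
        rintro x ⟨h1, h2, h3, -⟩
        exact ⟨h1, by simp [h2, h3]⟩
      have hintersub : P ∩ jP ⊆ {x | x + x = f} := by
        rintro x ⟨hxP, y, hyP, hxy⟩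
        have hyx : y + x = f := by
          rw [← hxy]
          funext i
          have := hyP.1 i
          simp only [Pi.add_apply, Pi.sub_apply]
          omega
        have hx2 : O.le (x + x) (y + x) := by rw [hyx]; exact hxP.2.2.2
        have hy2 : O.le (y + y) (y + x) := by rw [hyx]; exact hyP.2.2.2
        have hxley : O.le x y := Aux.le_cancel O hx2
        have hylex : O.le y x := by
          apply Aux.le_cancel O (c := y)
          rwa [add_comm y x] at hy2
        have hxy' : x = y := O.le_antisymm _ _ hxley hylex
        show x + x = f
        rw [hxy', ← hyx, hxy']
      have hinter1 : (P ∩ jP).ncard ≤ 1 := by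
        rcases (P ∩ jP).eq_empty_or_nonempty with h | ⟨x, hx⟩
        · simp [h]
        · have hsub : P ∩ jP ⊆ {x} := by
            intro z hz
            have h1 : z + z = f := hintersub hz
            have h2 : x + x = f := hintersub hx
            have : z = x := by
              funext i
              have e1 := congrFun h1 i
              have e2 := congrFun h2 i
              simp only [Pi.add_apply] at e1 e2
              omega
            simp [this]
          calc (P ∩ jP).ncard ≤ ({x} : Set (Fin p → ℕ)).ncard :=
                Set.ncard_le_ncard hsub (Set.finite_singleton x)
            _ = 1 := Set.ncard_singleton x
      have hunion : (P ∪ jP).ncard ≤ N - 2 := by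
        rw [← hcard2]
        exact Set.ncard_le_ncard (Set.union_subset hPsub hjPsub) hbfin.diff
      have := Set.ncard_union_add_ncard_inter P jP hPfin hjPfin
      omega
    have hNle : N ≤ 2 * g := by omega
    have hMcard : N - 1 - g ≤ M.ncard := by omega
    obtain ⟨T, hTM, hTcard, hTup⟩ := Aux.upset_exists O M hMfin (N - 1 - g) hMcard
    have hTfin : T.Finite := hMfin.subset hTM
    set S : Set (Fin p → ℕ) := {0} ∪ ({x | x ∉ Aux.box f} ∪ T) with hSdef
    have hmemS : ∀ z, z ∈ S ↔ z = 0 ∨ z ∉ Aux.box f ∨ z ∈ T := by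
      intro z
      simp [hSdef]
    have h0T : (0 : Fin p → ℕ) ∉ T := fun h => (hTM h).2.1 rfl
    have hfT : f ∉ T := fun h => (hTM h).2.2.1 rfl
    have hfbox : f ∈ Aux.box f := Aux.f_mem_box f
    have hfS : f ∉ S := by
      rw [hmemS]
      push_neg
      exact ⟨hf0, hfbox, hfT⟩
    have hgap : Set.univ \ S = Aux.box f \ ({0} ∪ T) := by
      ext x
      simp only [Set.mem_diff, Set.mem_univ, true_and, hmemS, Set.mem_union,
        Set.mem_singleton_iff]
      tauto
    have hgapcard : (Set.univ \ S).ncard = g := by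
      rw [hgap]
      have hsub : ({0} ∪ T : Set (Fin p → ℕ)) ⊆ Aux.box f := by
        rintro x (rfl | hx)
        · exact Aux.zero_mem_box f
        · exact (hTM hx).1
      have hfin0T : ({0} ∪ T : Set (Fin p → ℕ)).Finite := (hTfin.insert 0)
      have hc : ({0} ∪ T : Set (Fin p → ℕ)).ncard = 1 + (N - 1 - g) := by
        rw [Set.singleton_union, Set.ncard_insert_of_notMem h0T hTfin, hTcard]
        omega
      rw [Set.ncard_diff hsub hfin0T, hbN, hc]
      omega
    refine ⟨S, ⟨⟨Set.subset_univ S, Or.inl rfl, ?_, ?_⟩, ⟨⟨⟨trivial, hfS⟩, ?_⟩, ?_⟩⟩, ?_⟩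
    · -- closure
      intro x hx y hy
      rw [hmemS] at hx hy ⊢
      rcases hx with rfl | hx | hx
      · simpa only [zero_add] using hy
      · right; left
        intro hcon
        exact hx (hboxmem x y hcon).1
      · rcases hy with rfl | hy | hy
        · simp only [add_zero]; tauto
        · right; left
          intro hcon
          exact hy (hboxmem x y hcon).2
        · by_cases hz : x + y ∈ Aux.box f
          · right; right
            apply hTup x hx _ _ (Aux.le_add_self O x y)
            obtain ⟨hxb, hx0, hxf, hxlt⟩ := hTM hx
            obtain ⟨hyb, hy0, hyf, hylt⟩ := hTM hy
            refine ⟨hz, ?_, ?_, ?_, ?_⟩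
            · intro h0
              apply hx0
              funext i
              have := congrFun h0 i
              simp only [Pi.add_apply, Pi.zero_apply] at this ⊢
              omega
            · intro hfz
              have h1 : O.le y x := by
                apply Aux.le_cancel O (c := x)
                rw [add_comm y x, hfz]
                exact hxlt.1
              have h2 : O.le x y := by
                apply Aux.le_cancel O (c := y)
                rw [hfz]
                exact hylt.1
              apply hxlt.2
              rw [← hfz, O.le_antisymm _ _ h2 h1]
            · refine O.le_trans _ _ _ hxlt.1 ?_
              have := Aux.le_add_self O (x + x) (y + y)
              have he : (x + x) + (y + y) = (x + y) + (x + y) := by abel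
              rwa [he] at this
            · intro hfe
              have h1 : O.le ((y + y) + (x + x)) (0 + (x + x)) := by
                rw [zero_add]
                have he : (y + y) + (x + x) = (x + y) + (x + y) := by abel
                rw [he, ← hfe]
                exact hxlt.1
              have h2 : O.le (y + y) 0 := Aux.le_cancel O h1
              have h3 : y + y = 0 := O.le_antisymm _ _ h2 (O.zero_le _)
              apply hy0
              funext i
              have := congrFun h3 i
              simp only [Pi.add_apply, Pi.zero_apply] at this ⊢
              omega
          · right; left; exact hz
    · -- finite complement
      exact hbfin.subset (by rw [hgap]; exact Set.diff_subset)
    · -- max gap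
      intro x hx
      rw [hgap] at hx
      exact Aux.le_f_of_box O f hx.1
    · -- C \ BSet ⊆ S
      intro x hx
      rw [hmemS]
      right; left
      rw [Aux.BSet_univ] at hx
      exact hx.2
    · exact hgapcard
end

section
/- Let C ⊆ ℕ^p be an integer cone, ⪯ an admissible total order on ℕ^p, and f ∈ C \ {0}. For C-semigroups S, T with Fb(S) = Fb(T) = f, write S ~ T if S ∩ B(f) = T ∩ B(f). Then: (i) for every C-semigroup S with Fb(S) = f, the set O(S) = S ∪ (C \ B(f)) is a B-semigroup with respect to f and S ~ O(S); (ii) if R₁ and R₂ are B-semigroups with respect to f and R₁ ≠ R₂, then R₁ ~ R₂ fails. Consequently, every ~-equivalence class of C-semigroups with Frobenius element f contains exactly one B-semigroup with respect to f. -/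
open Set BigOperators

section BSet

variable {p : ℕ} {C : Set (Fin p → ℕ)} {f : Fin p → ℕ}

theorem mem_BSet_self (hfC : f ∈ C) (h0C : (0 : Fin p → ℕ) ∈ C) : f ∈ BSet C f :=
  ⟨hfC, 0, h0C, add_zero f⟩

theorem add_mem_diff_BSet (hC : ∀ x ∈ C, ∀ y ∈ C, x + y ∈ C) {x y : Fin p → ℕ}
    (hx : x ∈ C) (hy : y ∈ C \ BSet C f) : x + y ∈ C \ BSet C f := by
  refine ⟨hC x hx y hy.1, ?_⟩
  rintro ⟨-, z, hz, hxyz⟩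
  exact hy.2 ⟨hy.1, x + z, hC x hx z hz, by rw [← hxyz]; abel⟩

theorem IsCSemigroup.union_diff_BSet (hC : ∀ x ∈ C, ∀ y ∈ C, x + y ∈ C)
    {S : Set (Fin p → ℕ)} (hS : IsCSemigroup C S) : IsCSemigroup C (S ∪ (C \ BSet C f)) := by
  obtain ⟨hSC, h0S, hSadd, hfin⟩ := hS
  refine ⟨union_subset hSC sdiff_subset, Or.inl h0S, ?_, ?_⟩
  · rintro x (hx | hx) y (hy | hy)
    · exact Or.inl (hSadd x hx y hy)
    · exact Or.inr (add_mem_diff_BSet hC (hSC hx) hy)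
    · exact Or.inr (add_comm y x ▸ add_mem_diff_BSet hC (hSC hy) hx)
    · exact Or.inr (add_mem_diff_BSet hC hx.1 hy)
  · exact hfin.subset (sdiff_subset_sdiff_right subset_union_left)

theorem IsFrob.union_diff_BSet {O : AdmissibleOrder p} {S : Set (Fin p → ℕ)}
    (h0S : (0 : Fin p → ℕ) ∈ S) (hSC : S ⊆ C) (hS : IsFrob O C S f) :
    IsFrob O C (S ∪ (C \ BSet C f)) f := by
  obtain ⟨⟨hfC, hfS⟩, hmax⟩ := hS
  refine ⟨⟨hfC, ?_⟩, fun x hx => hmax x (sdiff_subset_sdiff_right subset_union_left hx)⟩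
  rintro (h | h)
  · exact hfS h
  · exact h.2 (mem_BSet_self hfC (hSC h0S))

theorem isBSemigroup_union_diff_BSet (hC : ∀ x ∈ C, ∀ y ∈ C, x + y ∈ C)
    {O : AdmissibleOrder p} {S : Set (Fin p → ℕ)} (hS : IsCSemigroup C S)
    (hSf : IsFrob O C S f) : IsBSemigroup O C (S ∪ (C \ BSet C f)) f :=
  ⟨hS.union_diff_BSet hC, hSf.union_diff_BSet hS.2.1 hS.1, subset_union_right⟩

theorem union_diff_BSet_inter_BSet (S : Set (Fin p → ℕ)) :
    (S ∪ (C \ BSet C f)) ∩ BSet C f = S ∩ BSet C f := by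
  rw [union_inter_distrib_right, sdiff_inter_self, union_empty]

theorem IsBSemigroup.eq_inter_BSet_union {O : AdmissibleOrder p} {R : Set (Fin p → ℕ)}
    (hR : IsBSemigroup O C R f) : R = R ∩ BSet C f ∪ (C \ BSet C f) := by
  have hdiff : R \ BSet C f = C \ BSet C f :=
    Subset.antisymm (sdiff_subset_sdiff_left hR.1.1) fun x hx => ⟨hR.2.2 hx, hx.2⟩
  rw [← hdiff, inter_union_sdiff]

theorem IsBSemigroup.eq_of_inter_BSet_eq {O : AdmissibleOrder p} {R₁ R₂ : Set (Fin p → ℕ)}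
    (h₁ : IsBSemigroup O C R₁ f) (h₂ : IsBSemigroup O C R₂ f)
    (h : R₁ ∩ BSet C f = R₂ ∩ BSet C f) : R₁ = R₂ := by
  rw [h₁.eq_inter_BSet_union, h₂.eq_inter_BSet_union, h]

end BSet

theorem statement8_general (p : ℕ) (C : Set (Fin p → ℕ)) (hC : IsIntegerCone p C)
    (O : AdmissibleOrder p) (f : Fin p → ℕ) :
    (∀ S : Set (Fin p → ℕ), IsCSemigroup C S → IsFrob O C S f →
      IsBSemigroup O C (S ∪ (C \ BSet C f)) f ∧
        (S ∪ (C \ BSet C f)) ∩ BSet C f = S ∩ BSet C f) ∧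
    (∀ R₁ R₂ : Set (Fin p → ℕ), IsBSemigroup O C R₁ f → IsBSemigroup O C R₂ f →
      R₁ ≠ R₂ → R₁ ∩ BSet C f ≠ R₂ ∩ BSet C f) ∧
    (∀ S : Set (Fin p → ℕ), IsCSemigroup C S → IsFrob O C S f →
      ∃! R : Set (Fin p → ℕ), IsBSemigroup O C R f ∧ R ∩ BSet C f = S ∩ BSet C f) := by
  have hCadd : ∀ x ∈ C, ∀ y ∈ C, x + y ∈ C := fun x hx y hy => hC.add_mem hx hy
  have hO : ∀ S, IsCSemigroup C S → IsFrob O C S f →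
      IsBSemigroup O C (S ∪ (C \ BSet C f)) f :=
    fun S hS hSf => isBSemigroup_union_diff_BSet hCadd hS hSf
  refine ⟨fun S hS hSf => ⟨hO S hS hSf, union_diff_BSet_inter_BSet S⟩,
    fun R₁ R₂ h₁ h₂ hne h => hne (h₁.eq_of_inter_BSet_eq h₂ h),
    fun S hS hSf => ⟨S ∪ (C \ BSet C f), ⟨hO S hS hSf, union_diff_BSet_inter_BSet S⟩, ?_⟩⟩
  rintro R ⟨hR, hRS⟩
  exact hR.eq_of_inter_BSet_eq (hO S hS hSf) (hRS.trans (union_diff_BSet_inter_BSet S).symm)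

/-- (i) O(S) = S ∪ (C \ B(f)) is a B-semigroup equivalent to S;
(ii) distinct B-semigroups are inequivalent; consequently every ~-class of C-semigroups
with Frobenius element f contains exactly one B-semigroup with respect to f. -/
theorem statement8 (p : ℕ) (hp : 0 < p) (C : Set (Fin p → ℕ)) (hC : IsIntegerCone p C)
    (O : AdmissibleOrder p) (f : Fin p → ℕ) (hfC : f ∈ C) (hf0 : f ≠ 0) :
    (∀ S : Set (Fin p → ℕ), IsCSemigroup C S → IsFrob O C S f →
      IsBSemigroup O C (S ∪ (C \ BSet C f)) f ∧
        (S ∪ (C \ BSet C f)) ∩ BSet C f = S ∩ BSet C f) ∧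
    (∀ R₁ R₂ : Set (Fin p → ℕ), IsBSemigroup O C R₁ f → IsBSemigroup O C R₂ f →
      R₁ ≠ R₂ → R₁ ∩ BSet C f ≠ R₂ ∩ BSet C f) ∧
    (∀ S : Set (Fin p → ℕ), IsCSemigroup C S → IsFrob O C S f →
      ∃! R : Set (Fin p → ℕ), IsBSemigroup O C R f ∧ R ∩ BSet C f = S ∩ BSet C f) :=
  statement8_general p C hC O f
end

section
/- Let C ⊆ ℕ^p be an integer cone, ⪯ an admissible total order on ℕ^p, f ∈ C \ {0}, and let S be a C-semigroup with Fb(S) = f having at least one gap outside B(f). Then S ∪ {λ(S)} is a C-semigroup with Frobenius element f and (S ∪ {λ(S)}) ∩ B(f) = S ∩ B(f). -/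
open Set BigOperators

theorem IsIntegerCone.zero_mem {p : ℕ} {C : Set (Fin p → ℕ)} (hC : IsIntegerCone p C) :
    (0 : Fin p → ℕ) ∈ C := by
  obtain ⟨A, rfl⟩ := hC
  exact ⟨0, fun _ => le_rfl, fun _ => by simp⟩

theorem self_mem_BSet {p : ℕ} {C : Set (Fin p → ℕ)} (hC : IsIntegerCone p C) {f : Fin p → ℕ}
    (hf : f ∈ C) : f ∈ BSet C f :=
  ⟨hf, 0, hC.zero_mem, add_zero f⟩

theorem AdmissibleOrder.le_add_right_s9 {p : ℕ} (O : AdmissibleOrder p) (x y : Fin p → ℕ) :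
    O.le x (x + y) := by
  simpa [add_comm] using O.add_right 0 y x (O.zero_le y)

theorem add_notMem_BSet {p : ℕ} {C : Set (Fin p → ℕ)} (hC : IsIntegerCone p C)
    {f l x : Fin p → ℕ} (hlC : l ∈ C) (hlB : l ∉ BSet C f) (hx : x ∈ C) :
    l + x ∉ BSet C f := by
  rintro ⟨-, y, hy, hxy⟩
  exact hlB ⟨hlC, x + y, hC.add_mem hx hy, by rw [← hxy, add_assoc]⟩

section LambdaGap

variable {p : ℕ} {C S : Set (Fin p → ℕ)} {O : AdmissibleOrder p} {f l : Fin p → ℕ}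

theorem IsLambdaGap.add_mem_insert (hC : IsIntegerCone p C) (hl : IsLambdaGap O C S f l)
    {x : Fin p → ℕ} (hx : x ∈ C) : l + x ∈ insert l S := by
  obtain ⟨⟨hlC, -⟩, hlB, hlmax⟩ := hl
  by_cases hxS : l + x ∈ S
  · exact Set.mem_insert_of_mem l hxS
  · have hle : O.le (l + x) l :=
      hlmax _ ⟨hC.add_mem hlC hx, hxS⟩ (add_notMem_BSet hC hlC hlB hx)
    rw [O.le_antisymm _ _ hle (O.le_add_right_s9 l x)]
    exact Set.mem_insert l S

theorem IsCSemigroup.insert_lambda (hC : IsIntegerCone p C) (hS : IsCSemigroup C S)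
    (hl : IsLambdaGap O C S f l) : IsCSemigroup C (insert l S) := by
  obtain ⟨hSC, h0S, hadd, hfin⟩ := hS
  have hsub : insert l S ⊆ C := Set.insert_subset hl.1.1 hSC
  refine ⟨hsub, Set.mem_insert_of_mem l h0S, ?_, hfin.subset (Set.sdiff_subset_sdiff_right
    (Set.subset_insert l S))⟩
  rintro x (rfl | hx) y hy
  · exact hl.add_mem_insert hC (hsub hy)
  · rcases hy with rfl | hy
    · rw [add_comm]
      exact hl.add_mem_insert hC (hSC hx)
    · exact Set.mem_insert_of_mem l (hadd x hx y hy)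

theorem IsFrob.insert (hF : IsFrob O C S f) (hlf : l ≠ f) : IsFrob O C (insert l S) f := by
  obtain ⟨⟨hfC, hfS⟩, hmax⟩ := hF
  refine ⟨⟨hfC, ?_⟩, fun x hx => hmax x ?_⟩
  · rintro (h | h)
    · exact hlf h.symm
    · exact hfS h
  · exact Set.sdiff_subset_sdiff_right (Set.subset_insert l S) hx

end LambdaGap

theorem statement9_general (p : ℕ) (C : Set (Fin p → ℕ)) (hC : IsIntegerCone p C)
    (O : AdmissibleOrder p) (f : Fin p → ℕ)
    (S : Set (Fin p → ℕ)) (hS : IsCSemigroup C S) (hF : IsFrob O C S f)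
    (l : Fin p → ℕ) (hl : IsLambdaGap O C S f l) :
    IsCSemigroup C (insert l S) ∧ IsFrob O C (insert l S) f ∧
      (insert l S) ∩ BSet C f = S ∩ BSet C f := by
  have hlf : l ≠ f := by
    rintro rfl
    exact hl.2.1 (self_mem_BSet hC hF.1.1)
  exact ⟨hS.insert_lambda hC hl, hF.insert hlf, Set.insert_inter_of_notMem hl.2.1⟩

/-- If S is a C-semigroup with Fb(S) = f having a gap outside B(f), then S ∪ {λ(S)} is a
C-semigroup with Frobenius element f and the same intersection with B(f). -/
theorem statement9 (p : ℕ) (hp : 0 < p) (C : Set (Fin p → ℕ)) (hC : IsIntegerCone p C)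
    (O : AdmissibleOrder p) (f : Fin p → ℕ) (hfC : f ∈ C) (hf0 : f ≠ 0)
    (S : Set (Fin p → ℕ)) (hS : IsCSemigroup C S) (hF : IsFrob O C S f)
    (hgap : ∃ x ∈ C \ S, x ∉ BSet C f)
    (l : Fin p → ℕ) (hl : IsLambdaGap O C S f l) :
    IsCSemigroup C (insert l S) ∧ IsFrob O C (insert l S) f ∧
      (insert l S) ∩ BSet C f = S ∩ BSet C f :=
  statement9_general p C hC O f S hS hF l hl
end
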